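/- arXiv:2309.04325 — 4 statements merged into one kernel-verified Lean document; each statement's English description precedes it below -/
import Mathlib

section
/- For every integer n ≥ 2 and every k with 1 ≤ k ≤ ⌊n/2⌋, the 2k-fold application of the operator (1/sinh r)·(d/dr) to sinh^n r equals the sum over l = 0,…,k of ((2k)! / (2^{k-l} (k-l)! (2l)!)) · (∏_{m=0}^{k+l-1} (n - 2m)) · cosh^{2l} r · sinh^{n-(2k+2l)} r, for all real r (interpreting sinh and cosh of a real variable; negative powers are allowed as real powers where sinh r ≠ 0, or the identity holds after clearing denominators). -/
open Real Finset

noncomputable def lcoef (n : ℝ) : ℕ → ℕ → ℝ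
  | 0, 0 => 1
  | 0, _ + 1 => 0
  | j + 1, 0 => (n - 2 * j) * lcoef n j 0
  | j + 1, l + 1 => (n - 2 * (j:ℝ) + 2 * ((l:ℝ) + 1)) * lcoef n j (l + 1)
      + ((j:ℝ) - 2 * l) * lcoef n j l

lemma lcoef_eq_zero (n : ℝ) : ∀ j l : ℕ, j < 2 * l → lcoef n j l = 0 := by
  intro j
  induction j with
  | zero => intro l hl; match l, hl with
            | l + 1, _ => rfl
  | succ j ih =>
      intro l hl
      match l, hl with
      | l + 1, hl =>
        have h1 : lcoef n j (l + 1) = 0 := ih _ (by omega)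
        rw [lcoef, h1]
        rcases Nat.lt_or_ge j (2 * l) with h | h
        · rw [ih _ h]; ring
        · have : j = 2 * l := by omega
          subst this
          push_cast
          ring

lemma fact_cast_succ (m : ℕ) : ((m + 1).factorial : ℝ) = (m + 1) * m.factorial := by
  rw [Nat.factorial_succ]; push_cast; ring

lemma lcoef_closed (n : ℝ) : ∀ j l : ℕ, 2 * l ≤ j →
    lcoef n j l = (j.factorial : ℝ) / (2 ^ l * l.factorial * (j - 2 * l).factorial) *
      ∏ m ∈ range (j - l), (n - 2 * m) := by
  intro j
  induction j with
  | zero =>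
      intro l hl
      have : l = 0 := by omega
      subst this
      simp [lcoef]
  | succ j ih =>
      intro l hl
      have hfne : ∀ m : ℕ, ((m.factorial : ℝ)) ≠ 0 :=
        fun m => Nat.cast_ne_zero.2 (Nat.factorial_ne_zero _)
      match l with
      | 0 =>
          rw [lcoef, ih 0 (by omega)]
          simp only [Nat.mul_zero, Nat.sub_zero]
          rw [Finset.prod_range_succ]
          simp only [pow_zero, Nat.factorial_zero, Nat.cast_one, one_mul,
            div_self (hfne j), div_self (hfne (j + 1))]
          ring
      | l + 1 =>
          rw [lcoef]
          rcases Nat.lt_or_ge j (2 * (l + 1)) with h | h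
          · have hj : j = 2 * l + 1 := by omega
            rw [lcoef_eq_zero n j (l+1) h, ih l (by omega)]
            subst hj
            have e1 : 2 * l + 1 - 2 * l = 1 := by omega
            have e2 : 2 * l + 1 + 1 - 2 * (l + 1) = 0 := by omega
            have e3 : 2 * l + 1 - l = l + 1 := by omega
            have e4 : 2 * l + 1 + 1 - (l + 1) = l + 1 := by omega
            rw [e1, e2, e3, e4]
            rw [show (2 * l + 1 + 1) = (2 * l + 1) + 1 from rfl, fact_cast_succ (2 * l + 1),
              fact_cast_succ l]
            simp only [Nat.factorial_one, Nat.factorial_zero, Nat.cast_one, pow_succ]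
            push_cast
            field_simp
            ring
          · obtain ⟨d, hd⟩ : ∃ d, j = 2 * (l + 1) + d := ⟨j - 2 * (l+1), by omega⟩
            subst hd
            rw [ih (l + 1) (by omega), ih l (by omega)]
            have e1 : 2 * (l + 1) + d - 2 * (l + 1) = d := by omega
            have e2 : 2 * (l + 1) + d - 2 * l = d + 2 := by omega
            have e3 : 2 * (l + 1) + d + 1 - 2 * (l + 1) = d + 1 := by omega
            have e4 : 2 * (l + 1) + d - (l + 1) = l + 1 + d := by omega
            have e5 : 2 * (l + 1) + d - l = l + 1 + d + 1 := by omega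
            have e6 : 2 * (l + 1) + d + 1 - (l + 1) = l + 1 + d + 1 := by omega
            rw [e1, e2, e3, e4, e5, e6]
            rw [Finset.prod_range_succ]
            rw [show (2 * (l + 1) + d + 1) = (2 * (l + 1) + d) + 1 from rfl,
              fact_cast_succ (2 * (l + 1) + d), fact_cast_succ (d + 1), fact_cast_succ d,
              fact_cast_succ l]
            simp only [pow_succ]
            push_cast
            field_simp
            ring

lemma lcoef_sum_step (n : ℝ) (j : ℕ) (T : ℕ → ℝ) :
    ∑ l ∈ range (j + 2), lcoef n (j + 1) l * T l
      = ∑ l ∈ range (j + 1), (((j:ℝ) - 2 * l) * lcoef n j l * T (l + 1)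
          + ((n:ℝ) - 2 * j + 2 * l) * lcoef n j l * T l) := by
  have hg : ∀ l : ℕ, ((n:ℝ) - 2 * j + 2 * ((l:ℝ) + 1)) * lcoef n j (l + 1) * T (l + 1)
      = (fun l : ℕ => ((n:ℝ) - 2 * j + 2 * l) * lcoef n j l * T l) (l + 1) := by
    intro l; push_cast; ring
  calc ∑ l ∈ range (j + 2), lcoef n (j + 1) l * T l
      = (∑ l ∈ range (j + 1), lcoef n (j + 1) (l + 1) * T (l + 1))
          + lcoef n (j + 1) 0 * T 0 := Finset.sum_range_succ' _ _
    _ = (∑ l ∈ range (j + 1), (((j:ℝ) - 2 * l) * lcoef n j l * T (l + 1)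
          + (fun l : ℕ => ((n:ℝ) - 2 * j + 2 * l) * lcoef n j l * T l) (l + 1)))
          + (fun l : ℕ => ((n:ℝ) - 2 * j + 2 * l) * lcoef n j l * T l) 0 := by
        congr 1
        · refine Finset.sum_congr rfl fun l _ => ?_
          rw [show lcoef n (j + 1) (l + 1)
              = (n - 2 * (j:ℝ) + 2 * ((l:ℝ) + 1)) * lcoef n j (l + 1)
                + ((j:ℝ) - 2 * l) * lcoef n j l from rfl, ← hg]
          ring
        · show lcoef n (j + 1) 0 * T 0 = _
          rw [show lcoef n (j + 1) 0 = (n - 2 * (j:ℝ)) * lcoef n j 0 from rfl]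
          push_cast; ring
    _ = (∑ l ∈ range (j + 1), ((j:ℝ) - 2 * l) * lcoef n j l * T (l + 1))
          + ((∑ l ∈ range (j + 1), (fun l : ℕ => ((n:ℝ) - 2 * j + 2 * l) * lcoef n j l * T l) (l + 1))
          + (fun l : ℕ => ((n:ℝ) - 2 * j + 2 * l) * lcoef n j l * T l) 0) := by
        rw [Finset.sum_add_distrib]; ring
    _ = (∑ l ∈ range (j + 1), ((j:ℝ) - 2 * l) * lcoef n j l * T (l + 1))
          + ∑ l ∈ range (j + 2), ((n:ℝ) - 2 * j + 2 * l) * lcoef n j l * T l := by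
        rw [Finset.sum_range_succ' (fun l : ℕ => ((n:ℝ) - 2 * j + 2 * l) * lcoef n j l * T l) (j + 1)]
    _ = _ := by
        rw [Finset.sum_range_succ (fun l : ℕ => ((n:ℝ) - 2 * j + 2 * l) * lcoef n j l * T l) (j + 1),
          lcoef_eq_zero n j (j + 1) (by omega), Finset.sum_add_distrib]
        ring

noncomputable def lfun (n : ℕ) (j : ℕ) : ℝ → ℝ := fun x =>
  ∑ l ∈ range (j + 1),
    lcoef (n:ℝ) j l * Real.cosh x ^ ((j:ℤ) - 2 * l) * Real.sinh x ^ ((n:ℤ) - 2 * j + 2 * l)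

lemma lfun_hasDerivAt (n : ℕ) (j : ℕ) (x : ℝ) (hx : Real.sinh x ≠ 0) :
    HasDerivAt (lfun n j) (Real.sinh x * lfun n (j + 1) x) x := by
  have hc : Real.cosh x ≠ 0 := (Real.cosh_pos x).ne'
  have hterm : ∀ l ∈ range (j + 1), HasDerivAt
      (fun y => lcoef (n:ℝ) j l * Real.cosh y ^ ((j:ℤ) - 2 * l) * Real.sinh y ^ ((n:ℤ) - 2 * j + 2 * l))
      (lcoef (n:ℝ) j l * ((((j:ℤ) - 2 * l : ℤ) : ℝ) * Real.cosh x ^ ((j:ℤ) - 2 * l - 1) * Real.sinh x)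
          * Real.sinh x ^ ((n:ℤ) - 2 * j + 2 * l)
        + lcoef (n:ℝ) j l * Real.cosh x ^ ((j:ℤ) - 2 * l)
          * ((((n:ℤ) - 2 * j + 2 * l : ℤ) : ℝ) * Real.sinh x ^ ((n:ℤ) - 2 * j + 2 * l - 1) * Real.cosh x)) x := by
    intro l _
    have h1 : HasDerivAt (fun y => Real.cosh y ^ ((j:ℤ) - 2 * l))
        ((((j:ℤ) - 2 * l : ℤ) : ℝ) * Real.cosh x ^ ((j:ℤ) - 2 * l - 1) * Real.sinh x) x := by
      have := (hasDerivAt_zpow ((j:ℤ) - 2 * l) (Real.cosh x) (Or.inl hc)).comp x (Real.hasDerivAt_cosh x)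
      simpa [Function.comp_def] using this
    have h2 : HasDerivAt (fun y => Real.sinh y ^ ((n:ℤ) - 2 * j + 2 * l))
        ((((n:ℤ) - 2 * j + 2 * l : ℤ) : ℝ) * Real.sinh x ^ ((n:ℤ) - 2 * j + 2 * l - 1) * Real.cosh x) x := by
      have := (hasDerivAt_zpow ((n:ℤ) - 2 * j + 2 * l) (Real.sinh x) (Or.inl hx)).comp x (Real.hasDerivAt_sinh x)
      simpa [Function.comp_def] using this
    have := ((h1.mul h2).const_mul (lcoef (n:ℝ) j l))
    convert this using 1
    · rfl
    · rfl
    · ext y; simp only [Pi.mul_apply]; ring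
    · ring
  have hsum := HasDerivAt.fun_sum hterm
  set T : ℕ → ℝ := fun l : ℕ =>
    Real.sinh x * (Real.cosh x ^ ((j:ℤ) + 1 - 2 * l) * Real.sinh x ^ ((n:ℤ) - 2 * ((j:ℤ) + 1) + 2 * l))
    with hT
  have key : Real.sinh x * lfun n (j + 1) x
      = ∑ l ∈ range (j + 1), ((((j:ℕ):ℝ) - 2 * l) * lcoef (n:ℝ) j l * T (l + 1)
          + (((n:ℕ):ℝ) - 2 * j + 2 * l) * lcoef (n:ℝ) j l * T l) := by
    rw [← lcoef_sum_step (n:ℝ) j T, lfun, Finset.mul_sum]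
    refine Finset.sum_congr rfl fun l _ => ?_
    rw [hT]
    push_cast
    ring
  convert hsum using 1
  · rfl
  · rfl
  · rfl
  rw [key]
  refine Finset.sum_congr rfl fun l _ => ?_
  have ec1 : Real.cosh x ^ ((j:ℤ) + 1 - 2 * ((l:ℤ) + 1)) = Real.cosh x ^ ((j:ℤ) - 2 * l - 1) := by
    congr 1; ring
  have es1 : Real.sinh x ^ ((n:ℤ) - 2 * ((j:ℤ) + 1) + 2 * ((l:ℤ) + 1)) = Real.sinh x ^ ((n:ℤ) - 2 * j + 2 * l) := by
    congr 1; ring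
  have ec2 : Real.cosh x ^ ((j:ℤ) + 1 - 2 * (l:ℤ)) = Real.cosh x ^ ((j:ℤ) - 2 * l) * Real.cosh x := by
    rw [show (j:ℤ) + 1 - 2 * (l:ℤ) = ((j:ℤ) - 2 * l) + 1 by ring, zpow_add_one₀ hc]
  have es2 : Real.sinh x ^ ((n:ℤ) - 2 * (j:ℤ) + 2 * l - 1)
      = Real.sinh x ^ ((n:ℤ) - 2 * ((j:ℤ) + 1) + 2 * (l:ℤ)) * Real.sinh x := by
    rw [show (n:ℤ) - 2 * (j:ℤ) + 2 * (l:ℤ) - 1 = ((n:ℤ) - 2 * ((j:ℤ) + 1) + 2 * l) + 1 by ring,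
      zpow_add_one₀ hx]
  rw [hT]
  simp only []
  push_cast
  rw [ec1, es1, ec2, es2]
  push_cast
  ring

lemma lfun_main (n : ℕ) : ∀ (j : ℕ) (x : ℝ), Real.sinh x ≠ 0 →
    (fun f : ℝ → ℝ => fun x => deriv f x / Real.sinh x)^[j] (fun x => Real.sinh x ^ n) x
      = lfun n j x := by
  intro j
  induction j with
  | zero =>
      intro x hx
      simp [lfun, lcoef, zpow_natCast]
  | succ j ih =>
      intro x hx
      rw [Function.iterate_succ_apply']
      have hev : (∀ᶠ y in nhds x, Real.sinh y ≠ 0) :=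
        Real.continuous_sinh.continuousAt.eventually_ne hx
      have heq : (fun f : ℝ → ℝ => fun x => deriv f x / Real.sinh x)^[j]
          (fun x => Real.sinh x ^ n) =ᶠ[nhds x] lfun n j :=
        hev.mono fun y hy => ih y hy
      show deriv ((fun f : ℝ → ℝ => fun x => deriv f x / Real.sinh x)^[j]
          (fun x => Real.sinh x ^ n)) x / Real.sinh x = _
      rw [heq.deriv_eq, (lfun_hasDerivAt n j x hx).deriv, mul_comm, mul_div_assoc,
        div_self hx, mul_one]

/-- For n ≥ 2 and 1 ≤ k ≤ ⌊n/2⌋, the 2k-fold application of the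
operator L f r = f'(r)/sinh r to sinh^n r equals
∑_{l=0}^k ((2k)!/(2^{k-l}(k-l)!(2l)!)) ∏_{m=0}^{k+l-1}(n-2m) cosh^{2l} r sinh^{n-(2k+2l)} r,
for all real r with sinh r ≠ 0 (negative powers interpreted as zpow). -/
theorem stmt_0 (n : ℕ) (hn : 2 ≤ n) (k : ℕ) (hk1 : 1 ≤ k) (hk2 : k ≤ n / 2)
    (r : ℝ) (hr : Real.sinh r ≠ 0) :
    (fun f : ℝ → ℝ => fun x => deriv f x / Real.sinh x)^[2 * k]
        (fun x => Real.sinh x ^ n) r =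
      ∑ l ∈ Finset.range (k + 1),
        ((2 * k).factorial : ℝ) /
            (2 ^ (k - l) * (k - l).factorial * (2 * l).factorial) *
          (∏ m ∈ Finset.range (k + l), ((n : ℝ) - 2 * m)) *
          Real.cosh r ^ (2 * l) *
          Real.sinh r ^ ((n : ℤ) - (2 * k + 2 * l)) := by
  rw [lfun_main n (2 * k) r hr, lfun]
  have hsub : Finset.range (k + 1) ⊆ Finset.range (2 * k + 1) := by
    intro a ha; simp only [Finset.mem_range] at *; omega
  rw [← Finset.sum_subset hsub (by
    intro l hl hnl
    simp only [Finset.mem_range] at hl hnl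
    rw [lcoef_eq_zero (n:ℝ) (2 * k) l (by omega)]
    ring)]
  rw [← Finset.sum_range_reflect]
  refine Finset.sum_congr rfl fun l hl => ?_
  simp only [Finset.mem_range] at hl
  have hlk : l ≤ k := by omega
  rw [show k + 1 - 1 - l = k - l from rfl]
  rw [lcoef_closed (n:ℝ) (2 * k) (k - l) (by omega)]
  have e1 : 2 * k - 2 * (k - l) = 2 * l := by omega
  have e2 : 2 * k - (k - l) = k + l := by omega
  rw [e1, e2]
  have hc : ((2 * k : ℕ) : ℤ) - 2 * ((k - l : ℕ) : ℤ) = ((2 * l : ℕ) : ℤ) := by push_cast; omega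
  have hs : ((n : ℕ) : ℤ) - 2 * ((2 * k : ℕ) : ℤ) + 2 * ((k - l : ℕ) : ℤ)
      = (n : ℤ) - (2 * (k : ℤ) + 2 * (l : ℤ)) := by push_cast; omega
  rw [hc, hs, zpow_natCast]
end

section
/- For every integer n ≥ 2 and every k with 1 ≤ k ≤ ⌊n/2⌋, the (2k+1)-fold application of the operator (1/sinh r)·(d/dr) to sinh^n r equals the sum over l = 1,…,k+1 of ((2k+1)! / (2^{k+1-l} (k+1-l)! (2l-1)!)) · (∏_{m=0}^{k+l-1} (n - 2m)) · cosh^{2l-1} r · sinh^{n-(2k+2l)} r, for all r with sinh r ≠ 0. -/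
/-- The coefficient of `cosh^l sinh^(n-j-l)` in the `j`-fold application of
`L f r = f'(r)/sinh r` to `sinh^n`. -/
noncomputable def Acoef (n j l : ℕ) : ℝ :=
  if l ≤ j ∧ (j + l) % 2 = 0 then
    (Nat.factorial j : ℝ) /
      (2 ^ ((j - l) / 2) * Nat.factorial ((j - l) / 2) * Nat.factorial l) *
      ∏ m ∈ Finset.range ((j + l) / 2), ((n : ℝ) - 2 * m)
  else 0

lemma Acoef_zero_of_gt {n j l : ℕ} (h : j < l) : Acoef n j l = 0 := by
  simp [Acoef, Nat.not_le.mpr h]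

lemma Acoef_zero_of_odd {n j l : ℕ} (h : (j + l) % 2 = 1) : Acoef n j l = 0 := by
  simp [Acoef, h]

lemma Acoef_rec_zero (n j : ℕ) : Acoef n (j + 1) 0 = Acoef n j 1 := by
  rcases Nat.even_or_odd j with he | ho
  · obtain ⟨t, rfl⟩ := he
    rw [Acoef_zero_of_odd (by omega : (t + t + 1 + 0) % 2 = 1),
      Acoef_zero_of_odd (by omega : (t + t + 1) % 2 = 1)]
  · obtain ⟨t, rfl⟩ := ho
    rw [Acoef, Acoef, if_pos ⟨by omega, by omega⟩, if_pos ⟨by omega, by omega⟩]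
    have e1 : (2 * t + 1 + 1 - 0) / 2 = t + 1 := by omega
    have e2 : (2 * t + 1 + 1 + 0) / 2 = t + 1 := by omega
    have e3 : (2 * t + 1 - 1) / 2 = t := by omega
    have e4 : (2 * t + 1 + 1) / 2 = t + 1 := by omega
    rw [e1, e2]
    try rw [e3]
    try rw [e4]
    have hfac : (Nat.factorial (2 * t + 1 + 1) : ℝ)
        = (2 * (t : ℝ) + 2) * Nat.factorial (2 * t + 1) := by
      rw [Nat.factorial_succ]; push_cast; ring
    have hft : (Nat.factorial (t + 1) : ℝ) = ((t : ℝ) + 1) * Nat.factorial t := by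
      rw [Nat.factorial_succ]; push_cast; ring
    rw [hfac, hft, Nat.factorial_zero, Nat.factorial_one]
    have h1 : (Nat.factorial t : ℝ) ≠ 0 := by positivity
    have h2 : (Nat.factorial (2 * t + 1) : ℝ) ≠ 0 := by positivity
    have h3 : ((t : ℝ) + 1) ≠ 0 := by positivity
    have h4 : (2 : ℝ) ^ t ≠ 0 := by positivity
    have h5 : (2 : ℝ) ^ (t + 1) = 2 ^ t * 2 := by ring
    rw [h5]
    field_simp

lemma Acoef_rec_succ (n j l : ℕ) :
    Acoef n (j + 1) (l + 1) =
      ((l : ℝ) + 2) * Acoef n j (l + 2) + ((n : ℝ) - j - l) * Acoef n j l := by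
  by_cases hlj : l ≤ j
  · by_cases hpar : (j + l) % 2 = 0
    · obtain ⟨s, rfl⟩ : ∃ s, j = l + 2 * s := ⟨(j - l) / 2, by omega⟩
      cases s with
      | zero =>
        simp only [Nat.mul_zero, Nat.add_zero]
        rw [Acoef_zero_of_gt (by omega : l < l + 2), Acoef, Acoef,
          if_pos ⟨le_refl _, by omega⟩, if_pos ⟨le_refl _, by omega⟩]
        have e1 : (l + 1 - (l + 1)) / 2 = 0 := by omega
        have e2 : (l + 1 + (l + 1)) / 2 = l + 1 := by omega
        have e3 : (l - l) / 2 = 0 := by omega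
        have e4 : (l + l) / 2 = l := by omega
        rw [e1, e2, e3, e4, Finset.prod_range_succ, Nat.factorial_zero]
        have h5 : ((l + 1).factorial : ℝ) ≠ 0 := by positivity
        have h6 : ((l).factorial : ℝ) ≠ 0 := by positivity
        push_cast
        field_simp
        ring
      | succ t =>
        rw [Acoef, Acoef, Acoef, if_pos ⟨by omega, by omega⟩, if_pos ⟨by omega, by omega⟩,
          if_pos ⟨by omega, by omega⟩]
        have e1 : (l + 2 * (t + 1) + 1 - (l + 1)) / 2 = t + 1 := by omega
        have e2 : (l + 2 * (t + 1) + 1 + (l + 1)) / 2 = l + t + 2 := by omega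
        have e3 : (l + 2 * (t + 1) - (l + 2)) / 2 = t := by omega
        have e4 : (l + 2 * (t + 1) + (l + 2)) / 2 = l + t + 2 := by omega
        have e5 : (l + 2 * (t + 1) - l) / 2 = t + 1 := by omega
        have e6 : (l + 2 * (t + 1) + l) / 2 = l + t + 1 := by omega
        rw [e1, e2, e3, e4, e5, e6]
        have hP : ∏ m ∈ Finset.range (l + t + 2), ((n : ℝ) - 2 * m)
            = (∏ m ∈ Finset.range (l + t + 1), ((n : ℝ) - 2 * m))
              * ((n : ℝ) - 2 * (l + t + 1)) := by
          rw [Finset.prod_range_succ]; push_cast; ring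
        rw [hP]
        have hfj : (Nat.factorial (l + 2 * (t + 1) + 1) : ℝ)
            = ((l : ℝ) + 2 * t + 3) * Nat.factorial (l + 2 * (t + 1)) := by
          rw [Nat.factorial_succ]; push_cast; ring
        have hft : (Nat.factorial (t + 1) : ℝ) = ((t : ℝ) + 1) * Nat.factorial t := by
          rw [Nat.factorial_succ]; push_cast; ring
        have hfl2 : (Nat.factorial (l + 2) : ℝ)
            = ((l : ℝ) + 2) * ((l : ℝ) + 1) * Nat.factorial l := by
          show (Nat.factorial (l + 1 + 1) : ℝ) = _
          rw [Nat.factorial_succ, Nat.factorial_succ]; push_cast; ring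
        have hfl1 : (Nat.factorial (l + 1) : ℝ) = ((l : ℝ) + 1) * Nat.factorial l := by
          rw [Nat.factorial_succ]; push_cast; ring
        rw [hfj, hft, hfl2, hfl1]
        have h2 : (2 : ℝ) ^ (t + 1) = 2 ^ t * 2 := by ring
        rw [h2]
        have h1 : (Nat.factorial t : ℝ) ≠ 0 := by positivity
        have h3 : (Nat.factorial l : ℝ) ≠ 0 := by positivity
        have h4 : ((t : ℝ) + 1) ≠ 0 := by positivity
        have h5 : ((l : ℝ) + 1) ≠ 0 := by positivity
        have h6 : ((l : ℝ) + 2) ≠ 0 := by positivity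
        have h7 : (2 : ℝ) ^ t ≠ 0 := by positivity
        push_cast
        field_simp
        ring
    · have hpar' : (j + l) % 2 = 1 := by omega
      rw [Acoef_zero_of_odd (by omega : (j + 1 + (l + 1)) % 2 = 1),
        Acoef_zero_of_odd (by omega : (j + (l + 2)) % 2 = 1),
        Acoef_zero_of_odd hpar']
      ring
  · rw [Acoef_zero_of_gt (by omega), Acoef_zero_of_gt (by omega), Acoef_zero_of_gt (by omega)]
    ring

lemma shift2 (f : ℕ → ℝ) (j : ℕ) (h0 : f 0 = 0) (h1 : f (j + 2) = 0) (h2 : f (j + 3) = 0) :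
    ∑ l ∈ Finset.range (j + 2), f l = f 1 + ∑ l ∈ Finset.range (j + 2), f (l + 2) := by
  rw [Finset.sum_range_succ' f (j + 1), Finset.sum_range_succ' (fun l => f (l + 1)) j,
    Finset.sum_range_succ (fun l => f (l + 2)) (j + 1),
    Finset.sum_range_succ (fun l => f (l + 2)) j]
  simp only [h0, h1, h2, add_zero]
  ring

lemma key (n j : ℕ) : ∀ r : ℝ, Real.sinh r ≠ 0 →
    (fun f : ℝ → ℝ => fun x => deriv f x / Real.sinh x)^[j] (fun x => Real.sinh x ^ n) r =
      ∑ l ∈ Finset.range (j + 2),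
        Acoef n j l * Real.cosh r ^ l * Real.sinh r ^ ((n : ℤ) - j - l) := by
  induction j with
  | zero =>
    intro r hr
    simp only [Function.iterate_zero, id_eq]
    rw [Finset.sum_range_succ, Finset.sum_range_succ, Finset.sum_range_zero]
    have h1 : Acoef n 0 1 = 0 := Acoef_zero_of_gt (by omega)
    have h0 : Acoef n 0 0 = 1 := by simp [Acoef]
    rw [h0, h1]
    norm_num
  | succ j ih =>
    intro r hr
    have hr0 : r ≠ 0 := fun h => hr (by simp [h])
    rw [Function.iterate_succ_apply']
    have hev : ((fun f : ℝ → ℝ => fun x => deriv f x / Real.sinh x)^[j]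
          (fun x => Real.sinh x ^ n)) =ᶠ[nhds r]
        (fun x => ∑ l ∈ Finset.range (j + 2),
          Acoef n j l * Real.cosh x ^ l * Real.sinh x ^ ((n : ℤ) - j - l)) := by
      filter_upwards [isOpen_compl_singleton.mem_nhds hr0] with x hx
      exact ih x (Real.sinh_ne_zero.mpr hx)
    show deriv _ r / Real.sinh r = _
    rw [hev.deriv_eq]
    have hder : ∀ l, HasDerivAt
        (fun x => Acoef n j l * Real.cosh x ^ l * Real.sinh x ^ ((n : ℤ) - j - l))
        (Acoef n j l * ((l : ℝ) * Real.cosh r ^ (l - 1) * Real.sinh r)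
            * Real.sinh r ^ ((n : ℤ) - j - l)
          + Acoef n j l * Real.cosh r ^ l
            * ((((n : ℤ) - j - l : ℤ) : ℝ) * Real.sinh r ^ ((n : ℤ) - j - l - 1)
                * Real.cosh r)) r := by
      intro l
      have h1 : HasDerivAt (fun x => Acoef n j l * Real.cosh x ^ l)
          (Acoef n j l * ((l : ℝ) * Real.cosh r ^ (l - 1) * Real.sinh r)) r :=
        ((Real.hasDerivAt_cosh r).pow l).const_mul _
      have h2 : HasDerivAt (fun x => Real.sinh x ^ ((n : ℤ) - j - l))
          ((((n : ℤ) - j - l : ℤ) : ℝ) * Real.sinh r ^ ((n : ℤ) - j - l - 1)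
            * Real.cosh r) r := by
        have := (hasDerivAt_zpow ((n : ℤ) - j - l) (Real.sinh r) (Or.inl hr)).comp r
          (Real.hasDerivAt_sinh r)
        simpa [Function.comp_def, mul_assoc] using this
      exact h1.mul h2
    have hg : HasDerivAt
        (fun x => ∑ l ∈ Finset.range (j + 2),
          Acoef n j l * Real.cosh x ^ l * Real.sinh x ^ ((n : ℤ) - j - l))
        (∑ l ∈ Finset.range (j + 2),
          (Acoef n j l * ((l : ℝ) * Real.cosh r ^ (l - 1) * Real.sinh r)
              * Real.sinh r ^ ((n : ℤ) - j - l)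
            + Acoef n j l * Real.cosh r ^ l
              * ((((n : ℤ) - j - l : ℤ) : ℝ) * Real.sinh r ^ ((n : ℤ) - j - l - 1)
                  * Real.cosh r))) r :=
      HasDerivAt.fun_sum fun l _ => hder l
    rw [hg.deriv, Finset.sum_div]
    have hterm : ∀ l ∈ Finset.range (j + 2),
        (Acoef n j l * ((l : ℝ) * Real.cosh r ^ (l - 1) * Real.sinh r)
              * Real.sinh r ^ ((n : ℤ) - j - l)
            + Acoef n j l * Real.cosh r ^ l
              * ((((n : ℤ) - j - l : ℤ) : ℝ) * Real.sinh r ^ ((n : ℤ) - j - l - 1)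
                  * Real.cosh r)) / Real.sinh r
          = ((l : ℝ) * Acoef n j l * Real.cosh r ^ (l - 1)
                * Real.sinh r ^ ((n : ℤ) - j - l))
            + (((n : ℝ) - j - l) * Acoef n j l * Real.cosh r ^ (l + 1)
                * Real.sinh r ^ ((n : ℤ) - j - l - 2)) := by
      intro l _
      rw [div_eq_iff hr]
      have hz1 : Real.sinh r ^ ((n : ℤ) - j - l - 1)
          = Real.sinh r ^ ((n : ℤ) - j - l - 2) * Real.sinh r := by
        rw [← zpow_add_one₀ hr]
        congr 1
        ring
      have hc : (((n : ℤ) - j - l : ℤ) : ℝ) = (n : ℝ) - j - l := by push_cast; ring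
      rw [hz1, hc]
      ring
    rw [Finset.sum_congr rfl hterm, Finset.sum_add_distrib]
    have hu : ∑ l ∈ Finset.range (j + 2),
          ((l : ℝ) * Acoef n j l * Real.cosh r ^ (l - 1)
            * Real.sinh r ^ ((n : ℤ) - j - l))
        = Acoef n j 1 * Real.sinh r ^ ((n : ℤ) - j - 1)
          + ∑ l ∈ Finset.range (j + 2),
              (((l : ℝ) + 2) * Acoef n j (l + 2)) * Real.cosh r ^ (l + 1)
                * Real.sinh r ^ ((n : ℤ) - j - l - 2) := by
      rw [shift2 (fun l => (l : ℝ) * Acoef n j l * Real.cosh r ^ (l - 1)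
            * Real.sinh r ^ ((n : ℤ) - j - l)) j (by simp)
          (by simp [Acoef_zero_of_gt (show j < j + 2 by omega)])
          (by simp [Acoef_zero_of_gt (show j < j + 3 by omega)])]
      congr 1
      · norm_num
      · apply Finset.sum_congr rfl
        intro l _
        have h1 : l + 2 - 1 = l + 1 := by omega
        have h2 : ((n : ℤ) - j - (l + 2 : ℕ)) = (n : ℤ) - j - l - 2 := by push_cast; ring
        rw [h1, h2]
        push_cast
        ring
    rw [hu]
    rw [Finset.sum_range_succ' (fun l => Acoef n (j + 1) l * Real.cosh r ^ l
        * Real.sinh r ^ ((n : ℤ) - (j + 1 : ℕ) - l)) (j + 2)]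
    have hp0 : Acoef n (j + 1) 0 * Real.cosh r ^ 0
          * Real.sinh r ^ ((n : ℤ) - (j + 1 : ℕ) - (0 : ℕ))
        = Acoef n j 1 * Real.sinh r ^ ((n : ℤ) - j - 1) := by
      rw [Acoef_rec_zero]
      have h2 : ((n : ℤ) - (j + 1 : ℕ) - (0 : ℕ)) = (n : ℤ) - j - 1 := by push_cast; ring
      rw [h2]
      ring
    have hps : ∀ l ∈ Finset.range (j + 2),
        Acoef n (j + 1) (l + 1) * Real.cosh r ^ (l + 1)
            * Real.sinh r ^ ((n : ℤ) - (j + 1 : ℕ) - (l + 1 : ℕ))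
          = (((l : ℝ) + 2) * Acoef n j (l + 2)) * Real.cosh r ^ (l + 1)
              * Real.sinh r ^ ((n : ℤ) - j - l - 2)
            + ((n : ℝ) - j - l) * Acoef n j l * Real.cosh r ^ (l + 1)
              * Real.sinh r ^ ((n : ℤ) - j - l - 2) := by
      intro l _
      rw [Acoef_rec_succ]
      have h2 : ((n : ℤ) - (j + 1 : ℕ) - (l + 1 : ℕ)) = (n : ℤ) - j - l - 2 := by
        push_cast; ring
      rw [h2]
      ring
    rw [Finset.sum_congr rfl hps, hp0, Finset.sum_add_distrib]
    ring

/-- For n ≥ 2 and 1 ≤ k ≤ ⌊n/2⌋, the (2k+1)-fold application of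
L f r = f'(r)/sinh r to sinh^n r equals
∑_{l=1}^{k+1} ((2k+1)!/(2^{k+1-l}(k+1-l)!(2l-1)!)) ∏_{m=0}^{k+l-1}(n-2m)
  cosh^{2l-1} r sinh^{n-(2k+2l)} r, for all r with sinh r ≠ 0. -/
theorem stmt_1 (n : ℕ) (hn : 2 ≤ n) (k : ℕ) (hk1 : 1 ≤ k) (hk2 : k ≤ n / 2)
    (r : ℝ) (hr : Real.sinh r ≠ 0) :
    (fun f : ℝ → ℝ => fun x => deriv f x / Real.sinh x)^[2 * k + 1]
        (fun x => Real.sinh x ^ n) r =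
      ∑ l ∈ Finset.Icc 1 (k + 1),
        ((2 * k + 1).factorial : ℝ) /
            (2 ^ (k + 1 - l) * (k + 1 - l).factorial * (2 * l - 1).factorial) *
          (∏ m ∈ Finset.range (k + l), ((n : ℝ) - 2 * m)) *
          Real.cosh r ^ (2 * l - 1) *
          Real.sinh r ^ ((n : ℤ) - (2 * k + 2 * l)) := by
  rw [key n (2 * k + 1) r hr]
  have hinj : ∀ i ∈ Finset.Icc 1 (k + 1), ∀ i' ∈ Finset.Icc 1 (k + 1),
      2 * i - 1 = 2 * i' - 1 → i = i' := by
    intro i hi i' hi' h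
    simp only [Finset.mem_Icc] at hi hi'
    omega
  have himg : ∑ l ∈ Finset.range (2 * k + 1 + 2),
        Acoef n (2 * k + 1) l * Real.cosh r ^ l
          * Real.sinh r ^ ((n : ℤ) - (2 * k + 1 : ℕ) - l)
      = ∑ i ∈ Finset.Icc 1 (k + 1),
          Acoef n (2 * k + 1) (2 * i - 1) * Real.cosh r ^ (2 * i - 1)
            * Real.sinh r ^ ((n : ℤ) - (2 * k + 1 : ℕ) - (2 * i - 1 : ℕ)) := by
    rw [← Finset.sum_image (g := fun i => 2 * i - 1)
      (f := fun l => Acoef n (2 * k + 1) l * Real.cosh r ^ l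
          * Real.sinh r ^ ((n : ℤ) - (2 * k + 1 : ℕ) - l)) hinj]
    symm
    apply Finset.sum_subset
    · intro x hx
      simp only [Finset.mem_image, Finset.mem_Icc] at hx
      obtain ⟨i, hi, rfl⟩ := hx
      simp only [Finset.mem_range]
      omega
    · intro x hx hnx
      have hx' : x < 2 * k + 3 := Finset.mem_range.mp hx
      have : (2 * k + 1 + x) % 2 = 1 ∨ 2 * k + 1 < x := by
        by_contra hc
        push_neg at hc
        apply hnx
        simp only [Finset.mem_image, Finset.mem_Icc]
        exact ⟨(x + 1) / 2, by omega, by omega⟩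
      rcases this with h | h
      · rw [Acoef_zero_of_odd h]; ring
      · rw [Acoef_zero_of_gt h]; ring
  rw [himg]
  apply Finset.sum_congr rfl
  intro i hi
  simp only [Finset.mem_Icc] at hi
  obtain ⟨hi1, hi2⟩ := hi
  have hA : Acoef n (2 * k + 1) (2 * i - 1)
      = ((2 * k + 1).factorial : ℝ) /
          (2 ^ (k + 1 - i) * (k + 1 - i).factorial * (2 * i - 1).factorial) *
          ∏ m ∈ Finset.range (k + i), ((n : ℝ) - 2 * m) := by
    rw [Acoef, if_pos ⟨by omega, by omega⟩]
    have e1 : (2 * k + 1 - (2 * i - 1)) / 2 = k + 1 - i := by omega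
    have e2 : (2 * k + 1 + (2 * i - 1)) / 2 = k + i := by omega
    rw [e1, e2]
  have hz : ((n : ℤ) - (2 * k + 1 : ℕ) - (2 * i - 1 : ℕ)) = (n : ℤ) - (2 * k + 2 * i) := by
    have : ((2 * i - 1 : ℕ) : ℤ) = 2 * i - 1 := by
      push_cast [Nat.cast_sub (by omega : 1 ≤ 2 * i)]
      ring
    rw [this]
    push_cast
    ring
  rw [hA, hz]
end

section
/- For every integer l ≥ 1 and every real r, the l-fold application of the operator (1/sinh r)·(d/dr) to sinh^{2l+1} r equals ((2l+1)!! / (l+1)) · sinh((l+1) r). (Millson-type identity for iterated radial derivatives.) -/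
open Real Finset Nat

namespace Stmt2

/-- coefficient of sinh^(2(l-k)+1+2j) cosh^(k-2j) in L^k sinh^(2l+1) -/
def c (l k j : ℕ) : ℕ :=
  if 2*j ≤ k then
    (k.choose (2*j)) * (2*j-1).doubleFactorial * ∏ i ∈ Finset.range (k-j), (2*(l-i)+1)
  else 0

lemma c_eq_zero (l k j : ℕ) (h : ¬ 2*j ≤ k) : c l k j = 0 := by simp [c, h]

lemma odd_df (j : ℕ) : (2*j+1).doubleFactorial = (2*j+1) * (2*j-1).doubleFactorial := by
  cases j with
  | zero => simp [Nat.doubleFactorial]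
  | succ n =>
    have h1 : 2*(n+1)+1 = (2*n+1)+2 := by ring
    have h2 : 2*(n+1)-1 = 2*n+1 := by omega
    rw [h1, h2, Nat.doubleFactorial_add_two]

lemma c_rec_zero (l k : ℕ) (hkl : k < l) :
    c l (k+1) 0 = (2*(l-k)+1) * c l k 0 := by
  simp only [c, Nat.mul_zero, Nat.zero_le, if_pos, Nat.choose_zero_right, Nat.sub_zero]
  rw [Finset.prod_range_succ]
  have : 2*(l-k)+1 = 2*(l-k)+1 := rfl
  simp only [one_mul, Nat.zero_sub, Nat.doubleFactorial]
  ring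

lemma c_rec (l k j : ℕ) (hkl : k < l) :
    c l (k+1) (j+1) = (2*(l-k)+3+2*j) * c l k (j+1) + (k-2*j) * c l k j := by
  rcases le_or_gt (2*(j+1)) k with hA | hBC
  · -- main case
    have h1 : 2*(j+1) ≤ k+1 := by omega
    have h2 : 2*j ≤ k := by omega
    rw [c, if_pos h1, c, if_pos hA, c, if_pos h2]
    have hkj : k+1-(j+1) = k-j := by omega
    have hkj2 : k-j = (k-(j+1))+1 := by omega
    rw [hkj, hkj2, Finset.prod_range_succ]
    have hf : 2*(l-(k-(j+1)))+1 = 2*(l-k)+3+2*j := by omega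
    rw [hf]
    have hdf : (2*(j+1)-1).doubleFactorial = (2*j+1) * (2*j-1).doubleFactorial := by
      have : 2*(j+1)-1 = 2*j+1 := by omega
      rw [this, odd_df]
    have hpascal : (k+1).choose (2*(j+1)) = k.choose (2*j+1) + k.choose (2*(j+1)) := by
      have : 2*(j+1) = (2*j+1)+1 := by ring
      rw [this, Nat.choose_succ_succ]
    have hch : k.choose (2*j+1) * (2*j+1) = k.choose (2*j) * (k-2*j) :=
      Nat.choose_succ_right_eq k (2*j)
    rw [hdf, hpascal]
    generalize hP : (∏ i ∈ Finset.range (k-(j+1)), (2*(l-i)+1)) = P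
    generalize hD : (2*j-1).doubleFactorial = D
    generalize hm : k - 2*j = m at hch ⊢
    generalize hq : 2*(l-k)+3+2*j = M
    zify at hch ⊢
    linear_combination ((D:ℤ) * P * M) * hch
  · rcases eq_or_lt_of_le (by omega : k+1 ≤ 2*(j+1)) with hB | hC
    · -- k = 2j+1
      have hk : k = 2*j+1 := by omega
      subst hk
      have h1 : 2*(j+1) ≤ 2*j+1+1 := by omega
      rw [c, if_pos h1, c_eq_zero _ _ _ (by omega), c, if_pos (by omega : 2*j ≤ 2*j+1)]
      have : 2*j+1+1 = 2*(j+1) := by ring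
      rw [this, Nat.choose_self]
      have hkj : 2*(j+1)-(j+1) = j+1 := by omega
      have hkj2 : 2*j+1-j = j+1 := by omega
      rw [hkj, hkj2]
      have hdf : (2*(j+1)-1).doubleFactorial = (2*j+1) * (2*j-1).doubleFactorial := by
        have : 2*(j+1)-1 = 2*j+1 := by omega
        rw [this, odd_df]
      have hsub : 2*j+1-2*j = 1 := by omega
      have hchoose : (2*j+1).choose (2*j) = 2*j+1 := Nat.choose_succ_self_right (2*j)
      rw [hdf, hchoose, hsub]
      ring
    · -- 2(j+1) > k+1
      rw [c_eq_zero _ _ _ (by omega), c_eq_zero _ _ _ (by omega)]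
      have : k - 2*j = 0 := by omega
      rw [this]
      ring

lemma prod_df : ∀ n, ∀ l, n ≤ l →
    (∏ i ∈ Finset.range n, (2*(l-i)+1)) * (2*(l-n)+1).doubleFactorial
      = (2*l+1).doubleFactorial := by
  intro n
  induction n with
  | zero => intro l _; simp
  | succ n ih =>
    intro l hl
    rw [Finset.prod_range_succ]
    have h1 : 2*(l-n)+1 = (2*(l-(n+1))+1)+2 := by omega
    have h2 : (2*(l-n)+1).doubleFactorial
        = (2*(l-n)+1) * (2*(l-(n+1))+1).doubleFactorial := by
      rw [h1, Nat.doubleFactorial_add_two, ← h1]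
    calc (∏ i ∈ Finset.range n, (2*(l-i)+1)) * (2*(l-n)+1) * (2*(l-(n+1))+1).doubleFactorial
        = (∏ i ∈ Finset.range n, (2*(l-i)+1)) * ((2*(l-n)+1) * (2*(l-(n+1))+1).doubleFactorial) := by ring
      _ = (∏ i ∈ Finset.range n, (2*(l-i)+1)) * (2*(l-n)+1).doubleFactorial := by rw [h2]
      _ = (2*l+1).doubleFactorial := ih l (by omega)

lemma c_final (l j : ℕ) :
    (l+1) * c l l j = (2*l+1).doubleFactorial * (l+1).choose (2*j+1) := by
  rcases le_or_gt (2*j) l with h | h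
  · rw [c, if_pos h]
    have hp : (∏ i ∈ Finset.range (l-j), (2*(l-i)+1)) * (2*j+1).doubleFactorial
        = (2*l+1).doubleFactorial := by
      have := prod_df (l-j) l (by omega)
      have hj : l-(l-j) = j := by omega
      rwa [hj] at this
    have hch := Nat.add_one_mul_choose_eq l (2*j)
    apply Nat.eq_of_mul_eq_mul_right (Nat.doubleFactorial_pos (2*j+1))
    rw [odd_df]
    generalize hP : (∏ i ∈ Finset.range (l-j), (2*(l-i)+1)) = P at hp
    generalize hD : (2*j-1).doubleFactorial = D at hp ⊢
    rw [odd_df, hD] at hp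
    zify at hch hp ⊢
    linear_combination ((D:ℤ)*D*P*(2*j+1))*hch + ((((l+1).choose (2*j+1)):ℤ)*(2*j+1)*D)*hp
  · rw [c_eq_zero _ _ _ (by omega), Nat.choose_eq_zero_of_lt (by omega)]
    simp

/-- explicit formula for the k-th iterate -/
noncomputable def F (l k : ℕ) : ℝ → ℝ := fun r =>
  ∑ j ∈ Finset.range (k+1),
    (c l k j : ℝ) * Real.sinh r ^ (2*(l-k)+2*j+1) * Real.cosh r ^ (k-2*j)

lemma F_zero (l : ℕ) (r : ℝ) : F l 0 r = Real.sinh r ^ (2*l+1) := by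
  simp [F, c]

lemma hasDerivAt_term (C : ℝ) (m b : ℕ) (r : ℝ) :
    HasDerivAt (fun x => C * Real.sinh x ^ (m+1) * Real.cosh x ^ b)
      (C * ((m+1 : ℕ) : ℝ) * Real.sinh r ^ m * Real.cosh r ^ (b+1)
        + C * ((b : ℕ) : ℝ) * Real.sinh r ^ (m+2) * Real.cosh r ^ (b-1)) r := by
  have hs : HasDerivAt (fun x => Real.sinh x ^ (m+1))
      (((m+1 : ℕ) : ℝ) * Real.sinh r ^ m * Real.cosh r) r := by
    have := (Real.hasDerivAt_sinh r).fun_pow (m+1)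
    simpa using this
  have hc : HasDerivAt (fun x => Real.cosh x ^ b)
      (((b : ℕ) : ℝ) * Real.cosh r ^ (b-1) * Real.sinh r) r :=
    (Real.hasDerivAt_cosh r).fun_pow b
  have h := (hs.const_mul C).fun_mul hc
  refine h.congr_deriv ?_
  ring

lemma hasDerivAt_F (t k : ℕ) (r : ℝ) :
    HasDerivAt (F (k+1+t) k)
      (∑ j ∈ Finset.range (k+1),
        ((c (k+1+t) k j : ℝ) * ((2*(t+1)+2*j+1 : ℕ) : ℝ)
            * Real.sinh r ^ (2*(t+1)+2*j) * Real.cosh r ^ ((k-2*j)+1)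
          + (c (k+1+t) k j : ℝ) * ((k-2*j : ℕ) : ℝ)
            * Real.sinh r ^ (2*(t+1)+2*j+2) * Real.cosh r ^ ((k-2*j)-1))) r := by
  have e1 : k+1+t-k = t+1 := by omega
  unfold F
  simp only [e1]
  apply HasDerivAt.fun_sum
  intro j _
  have h := hasDerivAt_term ((c (k+1+t) k j : ℝ)) (2*(t+1)+2*j) (k-2*j) r
  have e2 : 2*(t+1)+2*j+1 = (2*(t+1)+2*j)+1 := by omega
  have e3 : 2*(t+1)+2*j+2 = (2*(t+1)+2*j)+2 := by omega
  rw [e2, e3]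
  exact h

lemma deriv_F_step (t k : ℕ) (r : ℝ) :
    deriv (F (k+1+t) k) r = Real.sinh r * F (k+1+t) (k+1) r := by
  rw [(hasDerivAt_F t k r).deriv]
  have e1 : k+1+t-(k+1) = t := by omega
  simp only [F, e1, Finset.mul_sum]
  rw [Finset.sum_add_distrib]
  -- peel j = 0 from both the first sum and the RHS
  rw [Finset.sum_range_succ' (fun j =>
      (c (k+1+t) k j : ℝ) * ((2*(t+1)+2*j+1 : ℕ) : ℝ)
        * Real.sinh r ^ (2*(t+1)+2*j) * Real.cosh r ^ ((k-2*j)+1)) k]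
  rw [Finset.sum_range_succ' (fun j =>
      Real.sinh r * ((c (k+1+t) (k+1) j : ℝ)
        * Real.sinh r ^ (2*t+2*j+1) * Real.cosh r ^ ((k+1)-2*j))) (k+1)]
  -- extend the shifted first sum from range k to range (k+1)
  have hext : (∑ j ∈ Finset.range k,
      (c (k+1+t) k (j+1) : ℝ) * ((2*(t+1)+2*(j+1)+1 : ℕ) : ℝ)
        * Real.sinh r ^ (2*(t+1)+2*(j+1)) * Real.cosh r ^ ((k-2*(j+1))+1))
      = ∑ j ∈ Finset.range (k+1),
      (c (k+1+t) k (j+1) : ℝ) * ((2*(t+1)+2*(j+1)+1 : ℕ) : ℝ)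
        * Real.sinh r ^ (2*(t+1)+2*(j+1)) * Real.cosh r ^ ((k-2*(j+1))+1) := by
    rw [Finset.sum_range_succ, c_eq_zero _ _ _ (by omega)]
    simp
  rw [hext]
  have h0 : (c (k+1+t) k 0 : ℝ) * ((2*(t+1)+2*0+1 : ℕ) : ℝ)
        * Real.sinh r ^ (2*(t+1)+2*0) * Real.cosh r ^ ((k-2*0)+1)
      = Real.sinh r * ((c (k+1+t) (k+1) 0 : ℝ)
        * Real.sinh r ^ (2*t+2*0+1) * Real.cosh r ^ ((k+1)-2*0)) := by
    have hr0 := c_rec_zero (k+1+t) k (by omega)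
    have e2 : k+1+t-k = t+1 := by omega
    rw [e2] at hr0
    have hcast : (c (k+1+t) (k+1) 0 : ℝ) = ((2*(t+1)+1 : ℕ) : ℝ) * (c (k+1+t) k 0 : ℝ) := by
      exact_mod_cast congrArg (Nat.cast (R := ℝ)) hr0
    rw [hcast]
    simp only [Nat.mul_zero, Nat.sub_zero]
    push_cast
    ring
  have hterm : ∀ j ∈ Finset.range (k+1),
      ((c (k+1+t) k (j+1) : ℝ) * ((2*(t+1)+2*(j+1)+1 : ℕ) : ℝ)
          * Real.sinh r ^ (2*(t+1)+2*(j+1)) * Real.cosh r ^ ((k-2*(j+1))+1))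
        + ((c (k+1+t) k j : ℝ) * ((k-2*j : ℕ) : ℝ)
          * Real.sinh r ^ (2*(t+1)+2*j+2) * Real.cosh r ^ ((k-2*j)-1))
      = Real.sinh r * ((c (k+1+t) (k+1) (j+1) : ℝ)
          * Real.sinh r ^ (2*t+2*(j+1)+1) * Real.cosh r ^ ((k+1)-2*(j+1))) := by
    intro j _
    have hrec := c_rec (k+1+t) k j (by omega)
    have e2 : k+1+t-k = t+1 := by omega
    rw [e2] at hrec
    have hrecR : (c (k+1+t) (k+1) (j+1) : ℝ)
        = ((2*(t+1)+3+2*j : ℕ) : ℝ) * (c (k+1+t) k (j+1) : ℝ)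
          + ((k-2*j : ℕ) : ℝ) * (c (k+1+t) k j : ℝ) := by
      exact_mod_cast congrArg (Nat.cast (R := ℝ)) hrec
    have e3 : (k-2*j)-1 = (k+1)-2*(j+1) := by omega
    rw [e3, hrecR]
    by_cases hc2 : 2*(j+1) ≤ k
    · have e4 : (k-2*(j+1))+1 = (k+1)-2*(j+1) := by omega
      rw [e4]
      push_cast
      ring
    · rw [c_eq_zero _ _ _ hc2]
      push_cast
      ring
  have hsum : (∑ j ∈ Finset.range (k+1),
      (c (k+1+t) k (j+1) : ℝ) * ((2*(t+1)+2*(j+1)+1 : ℕ) : ℝ)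
        * Real.sinh r ^ (2*(t+1)+2*(j+1)) * Real.cosh r ^ ((k-2*(j+1))+1))
      + (∑ j ∈ Finset.range (k+1),
      (c (k+1+t) k j : ℝ) * ((k-2*j : ℕ) : ℝ)
        * Real.sinh r ^ (2*(t+1)+2*j+2) * Real.cosh r ^ ((k-2*j)-1))
      = ∑ j ∈ Finset.range (k+1),
        Real.sinh r * ((c (k+1+t) (k+1) (j+1) : ℝ)
          * Real.sinh r ^ (2*t+2*(j+1)+1) * Real.cosh r ^ ((k+1)-2*(j+1))) := by
    rw [← Finset.sum_add_distrib]
    exact Finset.sum_congr rfl hterm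
  linarith [h0, hsum]

lemma iterate_eq (l : ℕ) : ∀ k, k ≤ l → ∀ r : ℝ, r ≠ 0 →
    (fun f : ℝ → ℝ => fun x => deriv f x / Real.sinh x)^[k]
      (fun x => Real.sinh x ^ (2*l+1)) r = F l k r := by
  intro k
  induction k with
  | zero => intro _ r _; simp [F_zero]
  | succ k ih =>
    intro hk r hr
    rw [Function.iterate_succ_apply']
    have hev : (fun f : ℝ → ℝ => fun x => deriv f x / Real.sinh x)^[k]
        (fun x => Real.sinh x ^ (2*l+1)) =ᶠ[nhds r] F l k := by
      filter_upwards [compl_singleton_mem_nhds hr] with x hx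
      exact ih (by omega) x hx
    show deriv _ r / Real.sinh r = _
    rw [hev.deriv_eq]
    obtain ⟨t, ht⟩ : ∃ t, l = k+1+t := ⟨l-(k+1), by omega⟩
    subst ht
    rw [deriv_F_step t k r, mul_div_cancel_left₀ _ (Real.sinh_ne_zero.mpr hr)]

lemma sum_range_even_odd (f : ℕ → ℝ) : ∀ n, ∑ i ∈ Finset.range (2*n), f i
    = ∑ j ∈ Finset.range n, f (2*j) + ∑ j ∈ Finset.range n, f (2*j+1) := by
  intro n
  induction n with
  | zero => simp
  | succ n ih =>
    have h : 2*(n+1) = (2*n+1)+1 := by ring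
    rw [h, Finset.sum_range_succ, Finset.sum_range_succ, ih,
      Finset.sum_range_succ (fun j => f (2*j)) n,
      Finset.sum_range_succ (fun j => f (2*j+1)) n]
    ring

lemma sinh_expand (l : ℕ) (r : ℝ) :
    Real.sinh (((l : ℝ)+1)*r) = ∑ j ∈ Finset.range (l+1),
      ((l+1).choose (2*j+1) : ℝ) * Real.sinh r ^ (2*j+1) * Real.cosh r ^ (l-2*j) := by
  have ha : Real.exp (((l:ℝ)+1)*r) = (Real.sinh r + Real.cosh r)^(l+1) := by
    rw [Real.sinh_add_cosh, ← Real.exp_nat_mul]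
    push_cast
    ring_nf
  have hb : Real.exp (-(((l:ℝ)+1)*r)) = (-Real.sinh r + Real.cosh r)^(l+1) := by
    have : -Real.sinh r + Real.cosh r = Real.exp (-r) := by
      rw [← Real.cosh_sub_sinh]; ring
    rw [this, ← Real.exp_nat_mul]
    push_cast
    ring_nf
  have h2 : 2 * Real.sinh (((l:ℝ)+1)*r)
      = (Real.sinh r + Real.cosh r)^(l+1) - (-Real.sinh r + Real.cosh r)^(l+1) := by
    rw [Real.sinh_eq, ha, hb]
    ring
  rw [add_pow, add_pow] at h2
  rw [← Finset.sum_sub_distrib] at h2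
  have h3 : ∀ i ∈ Finset.range (l+1+1),
      Real.sinh r ^ i * Real.cosh r ^ (l+1-i) * ((l+1).choose i : ℝ)
        - (-Real.sinh r) ^ i * Real.cosh r ^ (l+1-i) * ((l+1).choose i : ℝ)
      = (1 - (-1:ℝ)^i) * (((l+1).choose i : ℝ) * Real.sinh r ^ i * Real.cosh r ^ (l+1-i)) := by
    intro i _
    rw [neg_pow]
    ring
  rw [Finset.sum_congr rfl h3] at h2
  have h4 : ∑ i ∈ Finset.range (l+1+1),
      (1 - (-1:ℝ)^i) * (((l+1).choose i : ℝ) * Real.sinh r ^ i * Real.cosh r ^ (l+1-i))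
      = ∑ i ∈ Finset.range (2*(l+1)),
      (1 - (-1:ℝ)^i) * (((l+1).choose i : ℝ) * Real.sinh r ^ i * Real.cosh r ^ (l+1-i)) := by
    apply Finset.sum_subset (Finset.range_subset_range.mpr (by omega))
    intro i _ hi
    have : l+1 < i := by
      simp only [Finset.mem_range, not_lt] at hi
      omega
    rw [Nat.choose_eq_zero_of_lt this]
    simp
  rw [h4, sum_range_even_odd] at h2
  have h5 : ∀ j ∈ Finset.range (l+1),
      (1 - (-1:ℝ)^(2*j)) * (((l+1).choose (2*j) : ℝ) * Real.sinh r ^ (2*j) * Real.cosh r ^ (l+1-2*j))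
      = 0 := by
    intro j _
    rw [pow_mul]
    norm_num
  rw [Finset.sum_congr rfl h5] at h2
  have h6 : ∀ j ∈ Finset.range (l+1),
      (1 - (-1:ℝ)^(2*j+1)) * (((l+1).choose (2*j+1) : ℝ) * Real.sinh r ^ (2*j+1) * Real.cosh r ^ (l+1-(2*j+1)))
      = 2 * (((l+1).choose (2*j+1) : ℝ) * Real.sinh r ^ (2*j+1) * Real.cosh r ^ (l-2*j)) := by
    intro j _
    have e : l+1-(2*j+1) = l-2*j := by omega
    rw [e, pow_succ, pow_mul]
    norm_num
  rw [Finset.sum_congr rfl h6] at h2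
  simp only [Finset.sum_const_zero, zero_add] at h2
  rw [← Finset.mul_sum] at h2
  exact mul_left_cancel₀ (two_ne_zero) h2

lemma F_last (l : ℕ) (r : ℝ) :
    ((l:ℝ)+1) * F l l r = ((2*l+1).doubleFactorial : ℝ) * Real.sinh (((l:ℝ)+1)*r) := by
  rw [sinh_expand, F]
  simp only [Nat.sub_self]
  rw [Finset.mul_sum, Finset.mul_sum]
  apply Finset.sum_congr rfl
  intro j _
  have hc := c_final l j
  have hcR : ((l:ℝ)+1) * (c l l j : ℝ)
      = ((2*l+1).doubleFactorial : ℝ) * ((l+1).choose (2*j+1) : ℝ) := by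
    exact_mod_cast congrArg (Nat.cast (R := ℝ)) hc
  have e : 2*0+2*j+1 = 2*j+1 := by omega
  rw [e]
  linear_combination (Real.sinh r ^ (2*j+1) * Real.cosh r ^ (l-2*j)) * hcR

end Stmt2



/-- For l ≥ 1 and every real r, the l-fold application of
L f r = f'(r)/sinh r to sinh^{2l+1} r equals ((2l+1)!!/(l+1)) sinh((l+1)r). -/
theorem stmt_2 (l : ℕ) (hl : 1 ≤ l) (r : ℝ) :
    (fun f : ℝ → ℝ => fun x => deriv f x / Real.sinh x)^[l]
        (fun x => Real.sinh x ^ (2 * l + 1)) r =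
      ((2 * l + 1).doubleFactorial : ℝ) / (l + 1) *
        Real.sinh ((l + 1) * r) := by
  by_cases hr : r = 0
  · subst hr
    obtain ⟨m, hm⟩ : ∃ m, l = m+1 := ⟨l-1, by omega⟩
    subst hm
    rw [Function.iterate_succ_apply']
    show deriv _ 0 / Real.sinh 0 = _
    rw [Real.sinh_zero, div_zero, mul_zero, Real.sinh_zero, mul_zero]
  · have h1 := Stmt2.iterate_eq l l le_rfl r hr
    have hl1 : ((l:ℝ)+1) ≠ 0 := by positivity
    rw [h1, div_mul_eq_mul_div, eq_div_iff hl1]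
    linear_combination Stmt2.F_last l r
end

section
/- For every integer k ≥ 1 and every real r, the (2k−1)-fold application of (1/sinh r)·(d/dr) to sinh^{4k−1} r equals ((4k−1)!! / (2k)) · sinh(2k r). -/
open Real Finset

noncomputable section StmtThree

/-- The operator `L f = f' / sinh`. -/
def Lop (f : ℝ → ℝ) : ℝ → ℝ := fun x => deriv f x / Real.sinh x

/-- Coefficients of the harmonic expansion of `L^m (sinh^{2(m+q)+1})`. -/
def cc (m q i : ℕ) : ℝ :=
  (-1) ^ (q - i) * ((2 * (m + q) + 1).doubleFactorial : ℝ) * (q.choose i : ℝ) *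
    ((m + i).factorial : ℝ) / (2 ^ q * ((m + i + q + 1).factorial : ℝ))

/-- The harmonic expansion of `L^m (sinh^{2(m+q)+1})`. -/
def S (m q : ℕ) (r : ℝ) : ℝ :=
  ∑ i ∈ range (q + 1), cc m q i * Real.sinh (((m : ℝ) + 1 + 2 * i) * r)

lemma cc_eq_zero {m q i : ℕ} (h : q < i) : cc m q i = 0 := by
  simp [cc, Nat.choose_eq_zero_of_lt h]

/-- Pad a sum whose coefficients vanish beyond `N`. -/
lemma pad_sum (c : ℕ → ℝ) (f : ℕ → ℝ) {N M : ℕ} (hNM : N ≤ M)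
    (hc : ∀ i, N ≤ i → c i = 0) :
    ∑ i ∈ range N, c i * f i = ∑ i ∈ range M, c i * f i := by
  refine Finset.sum_subset (Finset.range_subset_range.mpr hNM) ?_
  intro i hi hni
  rw [hc i (by simpa using hni), zero_mul]

/-- Product-to-sum: `sinh² r · sinh (n r)`. -/
lemma sinh_sq_mul (n r : ℝ) :
    Real.sinh r ^ 2 * Real.sinh (n * r) =
      (Real.sinh ((n + 2) * r) - 2 * Real.sinh (n * r) + Real.sinh ((n - 2) * r)) / 4 := by
  have e1 : Real.sinh ((n + 2) * r) =
      Real.sinh (n * r) * (2 * Real.cosh r ^ 2 - 1) +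
        Real.cosh (n * r) * (2 * Real.sinh r * Real.cosh r) := by
    rw [show (n + 2) * r = n * r + 2 * r by ring, Real.sinh_add, Real.cosh_two_mul,
      Real.sinh_two_mul, Real.cosh_sq]
    ring
  have e2 : Real.sinh ((n - 2) * r) =
      Real.sinh (n * r) * (2 * Real.cosh r ^ 2 - 1) -
        Real.cosh (n * r) * (2 * Real.sinh r * Real.cosh r) := by
    rw [show (n - 2) * r = n * r - 2 * r by ring, Real.sinh_sub, Real.cosh_two_mul,
      Real.sinh_two_mul, Real.cosh_sq]
    ring
  rw [e1, e2, Real.cosh_sq]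
  ring

/-- Product-to-sum: `cosh r · sinh (n r)`. -/
lemma cosh_mul_sinh (n r : ℝ) :
    Real.cosh r * Real.sinh (n * r) =
      (Real.sinh ((n + 1) * r) + Real.sinh ((n - 1) * r)) / 2 := by
  rw [show (n + 1) * r = n * r + r by ring, show (n - 1) * r = n * r - r by ring,
    Real.sinh_add, Real.sinh_sub]
  ring


lemma df_ne (n : ℕ) : ((n.doubleFactorial : ℕ) : ℝ) ≠ 0 :=
  Nat.cast_ne_zero.mpr (Nat.doubleFactorial_pos n).ne'

lemma fact_ne (n : ℕ) : ((n.factorial : ℕ) : ℝ) ≠ 0 :=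
  Nat.cast_ne_zero.mpr n.factorial_ne_zero

/-- evaluate `cc` with explicit gap `d = q - i`. -/
lemma cc_eval (m q i d : ℕ) (h : q = i + d) :
    cc m q i = (-1) ^ d * ((2 * (m + q) + 1).doubleFactorial : ℝ) * (q.factorial : ℝ) *
      ((m + i).factorial : ℝ) /
      ((2 : ℝ) ^ q * (i.factorial : ℝ) * (d.factorial : ℝ) * ((m + i + q + 1).factorial : ℝ)) := by
  have hiq : i ≤ q := by omega
  unfold cc
  rw [Nat.cast_choose ℝ hiq, show q - i = d by omega]
  field_simp

set_option maxHeartbeats 2000000 in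
/-- (C3b) Pascal-type identity for the base family. -/
lemma C3b (q j : ℕ) :
    4 * cc 0 (q + 1) (j + 1) = cc 0 q j - 2 * cc 0 q (j + 1) + cc 0 q (j + 2) := by
  rcases le_or_gt j q with hjq | hjq
  · obtain ⟨d, rfl⟩ : ∃ d, q = j + d := ⟨q - j, by omega⟩
    have n4 := fact_ne j
    have nb3 : ((j : ℝ) + 1) ≠ 0 := by positivity
    have e9 : (((j + 1).factorial : ℕ) : ℝ) = ((j : ℝ) + 1) * (j.factorial : ℝ) := by
      rw [Nat.factorial_succ]; push_cast; ring
    have e10 : (((j + 2).factorial : ℕ) : ℝ) =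
        ((j : ℝ) + 2) * (((j : ℝ) + 1) * (j.factorial : ℝ)) := by
      rw [show j + 2 = (j + 1) + 1 by omega, Nat.factorial_succ, Nat.factorial_succ]
      push_cast; ring
    rcases d with _ | d'
    · -- q = j
      simp only [Nat.add_zero] at *
      rw [cc_eq_zero (show j < j + 1 by omega), cc_eq_zero (show j < j + 2 by omega)]
      have b1 : ((2 * (0 + (j + 1)) + 1).doubleFactorial : ℝ) =
          (2 * (j : ℝ) + 3) * ((2 * (0 + j) + 1).doubleFactorial : ℝ) := by
        rw [show 2 * (0 + (j + 1)) + 1 = 2 * (0 + j) + 1 + 2 by omega,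
          Nat.doubleFactorial_add_two]
        push_cast; ring
      have b2 : ((0 + (j + 1)).factorial : ℝ) = ((j : ℝ) + 1) * ((0 + j).factorial : ℝ) := by
        rw [show 0 + (j + 1) = (0 + j) + 1 by omega, Nat.factorial_succ]; push_cast; ring
      have b3 : ((0 + (j + 1) + (j + 1) + 1).factorial : ℝ) =
          (2 * (j : ℝ) + 3) * ((2 * (j : ℝ) + 2) * ((0 + j + j + 1).factorial : ℝ)) := by
        rw [show 0 + (j + 1) + (j + 1) + 1 = (0 + j + j + 1) + 1 + 1 by omega,
          Nat.factorial_succ, Nat.factorial_succ]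
        push_cast; ring
      rw [cc_eval 0 (j + 1) (j + 1) 0 (by omega), cc_eval 0 j j 0 (by omega), b1, b2, b3,
        pow_succ (2 : ℝ) j]
      simp only [Nat.factorial_zero]
      have n1 := fact_ne (0 + j + j + 1)
      have n5 := df_ne (2 * (0 + j) + 1)
      have n6 : (2 : ℝ) ^ j ≠ 0 := by positivity
      push_cast
      field_simp
      ring
    · rcases d' with _ | e
      · -- q = j + 1
        rw [cc_eq_zero (show j + 1 < j + 2 by omega)]
        have b1 : ((2 * (0 + (j + 1 + 1)) + 1).doubleFactorial : ℝ) =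
            (2 * (j : ℝ) + 5) * ((2 * (0 + (j + 1)) + 1).doubleFactorial : ℝ) := by
          rw [show 2 * (0 + (j + 1 + 1)) + 1 = 2 * (0 + (j + 1)) + 1 + 2 by omega,
            Nat.doubleFactorial_add_two]
          push_cast; ring
        have b2 : (((j + 1 + 1).factorial : ℕ) : ℝ) =
            ((j : ℝ) + 2) * ((j + 1).factorial : ℝ) := by
          rw [Nat.factorial_succ]; push_cast; ring
        have b3 : ((0 + (j + 1)).factorial : ℝ) = ((j : ℝ) + 1) * ((0 + j).factorial : ℝ) := by
          rw [show 0 + (j + 1) = (0 + j) + 1 by omega, Nat.factorial_succ]; push_cast; ring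
        have b4 : ((0 + (j + 1) + (j + 1 + 1) + 1).factorial : ℝ) =
            (2 * (j : ℝ) + 4) * ((2 * (j : ℝ) + 3) * ((0 + j + (j + 1) + 1).factorial : ℝ)) := by
          rw [show 0 + (j + 1) + (j + 1 + 1) + 1 = (0 + j + (j + 1) + 1) + 1 + 1 by omega,
            Nat.factorial_succ, Nat.factorial_succ]
          push_cast; ring
        have b5 : ((0 + (j + 1) + (j + 1) + 1).factorial : ℝ) =
            (2 * (j : ℝ) + 3) * ((0 + j + (j + 1) + 1).factorial : ℝ) := by
          rw [show 0 + (j + 1) + (j + 1) + 1 = (0 + j + (j + 1) + 1) + 1 by omega,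
            Nat.factorial_succ]
          push_cast; ring
        have b6 : (((j + 1).factorial : ℕ) : ℝ) = ((j : ℝ) + 1) * (j.factorial : ℝ) := by
          rw [Nat.factorial_succ]; push_cast; ring
        rw [cc_eval 0 (j + 1 + 1) (j + 1) 1 (by omega), cc_eval 0 (j + 1) j 1 (by omega),
          cc_eval 0 (j + 1) (j + 1) 0 (by omega), b1, b2, b3, b4, b5, b6,
          pow_succ (2 : ℝ) (j + 1)]
        simp only [Nat.factorial_zero, Nat.factorial_one]
        have n1 := fact_ne (0 + j + (j + 1) + 1)
        have n5 := df_ne (2 * (0 + (j + 1)) + 1)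
        have n6 : (2 : ℝ) ^ (j + 1) ≠ 0 := by positivity
        push_cast
        field_simp
        ring
      · -- q = j + (e+2), general case
        have b1 : ((2 * (0 + (j + (e + 2) + 1)) + 1).doubleFactorial : ℝ) =
            (2 * ((j : ℝ) + e) + 7) * ((2 * (0 + (j + (e + 2))) + 1).doubleFactorial : ℝ) := by
          rw [show 2 * (0 + (j + (e + 2) + 1)) + 1 = 2 * (0 + (j + (e + 2))) + 1 + 2 by omega,
            Nat.doubleFactorial_add_two]
          push_cast; ring
        have b2 : (((j + (e + 2) + 1).factorial : ℕ) : ℝ) =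
            ((j : ℝ) + e + 3) * ((j + (e + 2)).factorial : ℝ) := by
          rw [Nat.factorial_succ]; push_cast; ring
        have b3 : ((0 + (j + 1)).factorial : ℝ) = ((j : ℝ) + 1) * ((0 + j).factorial : ℝ) := by
          rw [show 0 + (j + 1) = (0 + j) + 1 by omega, Nat.factorial_succ]; push_cast; ring
        have b3' : ((0 + (j + 2)).factorial : ℝ) =
            ((j : ℝ) + 2) * (((j : ℝ) + 1) * ((0 + j).factorial : ℝ)) := by
          rw [show 0 + (j + 2) = (0 + j) + 1 + 1 by omega, Nat.factorial_succ,
            Nat.factorial_succ]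
          push_cast; ring
        have b4 : ((0 + (j + 1) + (j + (e + 2) + 1) + 1).factorial : ℝ) =
            (2 * (j : ℝ) + e + 5) * ((2 * (j : ℝ) + e + 4) *
              ((0 + j + (j + (e + 2)) + 1).factorial : ℝ)) := by
          rw [show 0 + (j + 1) + (j + (e + 2) + 1) + 1 =
            (0 + j + (j + (e + 2)) + 1) + 1 + 1 by omega, Nat.factorial_succ,
            Nat.factorial_succ]
          push_cast; ring
        have b5 : ((0 + (j + 1) + (j + (e + 2)) + 1).factorial : ℝ) =
            (2 * (j : ℝ) + e + 4) * ((0 + j + (j + (e + 2)) + 1).factorial : ℝ) := by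
          rw [show 0 + (j + 1) + (j + (e + 2)) + 1 = (0 + j + (j + (e + 2)) + 1) + 1 by omega,
            Nat.factorial_succ]
          push_cast; ring
        have b6 : ((0 + (j + 2) + (j + (e + 2)) + 1).factorial : ℝ) =
            (2 * (j : ℝ) + e + 5) * ((2 * (j : ℝ) + e + 4) *
              ((0 + j + (j + (e + 2)) + 1).factorial : ℝ)) := by
          rw [show 0 + (j + 2) + (j + (e + 2)) + 1 =
            (0 + j + (j + (e + 2)) + 1) + 1 + 1 by omega, Nat.factorial_succ,
            Nat.factorial_succ]
          push_cast; ring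
        have b7 : (((e + 2).factorial : ℕ) : ℝ) =
            ((e : ℝ) + 2) * (((e : ℝ) + 1) * (e.factorial : ℝ)) := by
          rw [show e + 2 = (e + 1) + 1 by omega, Nat.factorial_succ, Nat.factorial_succ]
          push_cast; ring
        have b8 : (((e + 1).factorial : ℕ) : ℝ) = ((e : ℝ) + 1) * (e.factorial : ℝ) := by
          rw [Nat.factorial_succ]; push_cast; ring
        have n1 := fact_ne (0 + j + (j + (e + 2)) + 1)
        have n2 := fact_ne e
        have n5 := df_ne (2 * (0 + (j + (e + 2))) + 1)
        have n6 : (2 : ℝ) ^ (j + (e + 2)) ≠ 0 := by positivity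
        have n7 := fact_ne (j + (e + 2))
        have n8 := fact_ne (0 + j)
        have nb4 : ((e : ℝ) + 1) ≠ 0 := by positivity
        have nb5 : ((e : ℝ) + 2) ≠ 0 := by positivity
        have nb6 : (2 * (j : ℝ) + e + 4) ≠ 0 := by positivity
        have nb7 : (2 * (j : ℝ) + e + 5) ≠ 0 := by positivity
        set R : ℝ := ((2 * (0 + (j + (e + 2))) + 1).doubleFactorial : ℝ) *
            ((j + (e + 2)).factorial : ℝ) * ((0 + j).factorial : ℝ) /
            ((2 : ℝ) ^ (j + (e + 2)) * (j.factorial : ℝ) * (e.factorial : ℝ) *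
              ((0 + j + (j + (e + 2)) + 1).factorial : ℝ)) with hR
        have r1 : cc 0 (j + (e + 2) + 1) (j + 1) =
            R * ((-1 : ℝ) ^ (e + 2) * ((2 * ((j : ℝ) + e) + 7) * ((j : ℝ) + e + 3)) /
              (2 * (((e : ℝ) + 2) * (((e : ℝ) + 1) *
                ((2 * (j : ℝ) + e + 5) * (2 * (j : ℝ) + e + 4)))))) := by
          rw [cc_eval 0 (j + (e + 2) + 1) (j + 1) (e + 2) (by omega), b1, b2, b3, b4, b7, e9,
            pow_succ (2 : ℝ) (j + (e + 2)), hR]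
          push_cast
          field_simp
        have r2 : cc 0 (j + (e + 2)) j =
            R * ((-1 : ℝ) ^ (e + 2) / (((e : ℝ) + 2) * ((e : ℝ) + 1))) := by
          rw [cc_eval 0 (j + (e + 2)) j (e + 2) (by omega), b7, hR]
          push_cast
          field_simp
        have r3 : cc 0 (j + (e + 2)) (j + 1) =
            R * ((-1 : ℝ) ^ (e + 1) / (((e : ℝ) + 1) * (2 * (j : ℝ) + e + 4))) := by
          rw [cc_eval 0 (j + (e + 2)) (j + 1) (e + 1) (by omega), b3, b5, b8, e9, hR]
          push_cast
          field_simp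
        have r4 : cc 0 (j + (e + 2)) (j + 2) =
            R * ((-1 : ℝ) ^ e / ((2 * (j : ℝ) + e + 5) * (2 * (j : ℝ) + e + 4))) := by
          rw [cc_eval 0 (j + (e + 2)) (j + 2) e (by omega), b3', b6, e10, hR]
          push_cast
          field_simp
        rw [r1, r2, r3, r4, show ((-1 : ℝ) ^ (e + 2)) = (-1) ^ e * ((-1) * (-1)) by ring,
          show ((-1 : ℝ) ^ (e + 1)) = (-1) ^ e * (-1) by ring]
        field_simp
        ring
  · rw [cc_eq_zero (show q + 1 < j + 1 by omega), cc_eq_zero hjq,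
      cc_eq_zero (show q < j + 1 by omega), cc_eq_zero (show q < j + 2 by omega)]
    simp

set_option maxHeartbeats 1000000 in
/-- (C3a) bottom case. -/
lemma C3a (q : ℕ) : 4 * cc 0 (q + 1) 0 = -3 * cc 0 q 0 + cc 0 q 1 := by
  rcases q with _ | p
  · rw [cc_eq_zero (show 0 < 1 by omega)]
    norm_num [cc, Nat.doubleFactorial]
  · have b1 : ((2 * (0 + (p + 1 + 1)) + 1).doubleFactorial : ℝ) =
        (2 * (p : ℝ) + 5) * ((2 * (0 + (p + 1)) + 1).doubleFactorial : ℝ) := by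
      rw [show 2 * (0 + (p + 1 + 1)) + 1 = 2 * (0 + (p + 1)) + 1 + 2 by omega,
        Nat.doubleFactorial_add_two]
      push_cast; ring
    have b2 : (((p + 1 + 1).factorial : ℕ) : ℝ) = ((p : ℝ) + 2) * ((p + 1).factorial : ℝ) := by
      rw [Nat.factorial_succ]; push_cast; ring
    have b3 : ((0 + 0 + (p + 1 + 1) + 1).factorial : ℝ) =
        ((p : ℝ) + 3) * ((0 + 0 + (p + 1) + 1).factorial : ℝ) := by
      rw [show 0 + 0 + (p + 1 + 1) + 1 = (0 + 0 + (p + 1) + 1) + 1 by omega,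
        Nat.factorial_succ]
      push_cast; ring
    have b4 : ((0 + 1 + (p + 1) + 1).factorial : ℝ) =
        ((p : ℝ) + 3) * ((0 + 0 + (p + 1) + 1).factorial : ℝ) := by
      rw [show 0 + 1 + (p + 1) + 1 = (0 + 0 + (p + 1) + 1) + 1 by omega, Nat.factorial_succ]
      push_cast; ring
    have b5 : (((p + 1).factorial : ℕ) : ℝ) = ((p : ℝ) + 1) * (p.factorial : ℝ) := by
      rw [Nat.factorial_succ]; push_cast; ring
    rw [cc_eval 0 (p + 1 + 1) 0 (p + 1 + 1) (by omega), cc_eval 0 (p + 1) 0 (p + 1) (by omega),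
      cc_eval 0 (p + 1) 1 p (by omega), b1, b2, b3, b4, b5, pow_succ (2 : ℝ) (p + 1),
      pow_succ (-1 : ℝ) (p + 1), pow_succ (-1 : ℝ) p]
    simp only [Nat.factorial_zero, Nat.factorial_one]
    have n1 := fact_ne (0 + 0 + (p + 1) + 1)
    have n2 := fact_ne p
    have n5 := df_ne (2 * (0 + (p + 1)) + 1)
    have n6 : (2 : ℝ) ^ (p + 1) ≠ 0 := by positivity
    have nb : ((p : ℝ) + 3) ≠ 0 := by positivity
    push_cast
    field_simp
    ring

/-- (C2) identity for the cosh family base. -/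
lemma C2 (q i : ℕ) :
    2 * cc 1 q i = (2 * q + 3) * (cc 0 q i + cc 0 q (i + 1)) := by
  rcases le_or_gt i q with hiq | hiq
  · obtain ⟨d, rfl⟩ : ∃ d, q = i + d := ⟨q - i, by omega⟩
    have b1 : ((2 * (1 + (i + d)) + 1).doubleFactorial : ℝ) =
        (2 * ((i : ℝ) + d) + 3) * ((2 * (0 + (i + d)) + 1).doubleFactorial : ℝ) := by
      rw [show 2 * (1 + (i + d)) + 1 = 2 * (0 + (i + d)) + 1 + 2 by omega,
        Nat.doubleFactorial_add_two]
      push_cast; ring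
    have b2 : ((1 + i).factorial : ℝ) = ((i : ℝ) + 1) * ((0 + i).factorial : ℝ) := by
      rw [show 1 + i = (0 + i) + 1 by omega, Nat.factorial_succ]; push_cast; ring
    have b3 : ((1 + i + (i + d) + 1).factorial : ℝ) =
        (2 * (i : ℝ) + d + 2) * ((0 + i + (i + d) + 1).factorial : ℝ) := by
      rw [show 1 + i + (i + d) + 1 = (0 + i + (i + d) + 1) + 1 by omega, Nat.factorial_succ]
      push_cast; ring
    have b4 : ((0 + (i + 1)).factorial : ℝ) = ((i : ℝ) + 1) * ((0 + i).factorial : ℝ) := by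
      rw [show 0 + (i + 1) = (0 + i) + 1 by omega, Nat.factorial_succ]; push_cast; ring
    have b5 : ((0 + (i + 1) + (i + d) + 1).factorial : ℝ) =
        (2 * (i : ℝ) + d + 2) * ((0 + i + (i + d) + 1).factorial : ℝ) := by
      rw [show 0 + (i + 1) + (i + d) + 1 = (0 + i + (i + d) + 1) + 1 by omega,
        Nat.factorial_succ]
      push_cast; ring
    have e9 : (((i + 1).factorial : ℕ) : ℝ) = ((i : ℝ) + 1) * (i.factorial : ℝ) := by
      rw [Nat.factorial_succ]; push_cast; ring
    have n1 := fact_ne (0 + i + (i + d) + 1)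
    have n3 := fact_ne (0 + i)
    have n4 := fact_ne i
    have n5 := df_ne (2 * (0 + (i + d)) + 1)
    have n6 : (2 : ℝ) ^ (i + d) ≠ 0 := by positivity
    have nb2 : (2 * (i : ℝ) + d + 2) ≠ 0 := by positivity
    have nb3 : ((i : ℝ) + 1) ≠ 0 := by positivity
    rcases d with _ | e
    · simp only [Nat.add_zero] at *
      rw [cc_eq_zero (show i < i + 1 by omega)]
      rw [cc_eval 1 i i 0 (by omega), cc_eval 0 i i 0 (by omega), b1, b2, b3]
      simp only [Nat.factorial_zero]
      push_cast
      field_simp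
      ring
    · have e8 : (((e + 1).factorial : ℕ) : ℝ) = ((e : ℝ) + 1) * (e.factorial : ℝ) := by
        rw [Nat.factorial_succ]; push_cast; ring
      have n2 := fact_ne e
      have nb4 : ((e : ℝ) + 1) ≠ 0 := by positivity
      rw [cc_eval 1 (i + (e + 1)) i (e + 1) (by omega),
        cc_eval 0 (i + (e + 1)) i (e + 1) (by omega),
        cc_eval 0 (i + (e + 1)) (i + 1) e (by omega), b1, b2, b3, b4, b5, e8, e9,
        pow_succ (-1 : ℝ) e]
      push_cast
      field_simp
      ring
  · rw [cc_eq_zero hiq, cc_eq_zero (show q < i by omega), cc_eq_zero (show q < i + 1 by omega)]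
    simp

/-- (C0) bottom coefficient cancellation. -/
lemma C0 (m q : ℕ) :
    (2 * (m + q) + 4) * cc m (q + 1) 0 + (2 * (m + q) + 3) * cc m q 0 = 0 := by
  rw [cc_eval m (q + 1) 0 (q + 1) (by omega), cc_eval m q 0 q (by omega)]
  have e1 : ((2 * (m + (q + 1)) + 1).doubleFactorial : ℝ) =
      (2 * (m + q) + 3) * ((2 * (m + q) + 1).doubleFactorial : ℝ) := by
    rw [show 2 * (m + (q + 1)) + 1 = 2 * (m + q) + 1 + 2 by omega, Nat.doubleFactorial_add_two]
    push_cast; ring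
  have e2 : (((q + 1).factorial : ℕ) : ℝ) = (q + 1) * (q.factorial : ℝ) := by
    rw [Nat.factorial_succ]; push_cast; ring
  have e3 : ((m + 0 + (q + 1) + 1).factorial : ℝ) =
      (m + q + 2) * ((m + 0 + q + 1).factorial : ℝ) := by
    rw [show m + 0 + (q + 1) + 1 = (m + 0 + q + 1) + 1 by omega, Nat.factorial_succ]
    push_cast; ring
  rw [e1, e2, e3, pow_succ ((-1 : ℝ)) q, pow_succ (2 : ℝ) q]
  have n1 := fact_ne (m + 0 + q + 1)
  have n2 := fact_ne q
  have n3 := fact_ne (m + 0)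
  have n4 := df_ne (2 * (m + q) + 1)
  have n5 : (2 : ℝ) ^ q ≠ 0 := by positivity
  field_simp
  ring

set_option maxHeartbeats 8000000 in
/-- (C1) main recursion of coefficients. -/
lemma C1 (m q i : ℕ) :
    cc (m + 2) q i =
      (2 * (m + q) + 5) *
        ((2 * (m + q) + 4) * cc m (q + 1) (i + 1) + (2 * (m + q) + 3) * cc m q (i + 1)) := by
  rcases le_or_gt i q with hiq | hiq
  · obtain ⟨d, rfl⟩ : ∃ d, q = i + d := ⟨q - i, by omega⟩
    have e1 : ((2 * (m + 2 + (i + d)) + 1).doubleFactorial : ℝ) =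
        (2 * ((m : ℝ) + i + d) + 5) * ((2 * ((m : ℝ) + i + d) + 3) *
          ((2 * (m + (i + d)) + 1).doubleFactorial : ℝ)) := by
      rw [show 2 * (m + 2 + (i + d)) + 1 = 2 * (m + (i + d)) + 1 + 2 + 2 by omega,
        Nat.doubleFactorial_add_two, Nat.doubleFactorial_add_two]
      push_cast; ring
    have e2 : ((2 * (m + (i + d + 1)) + 1).doubleFactorial : ℝ) =
        (2 * ((m : ℝ) + i + d) + 3) * ((2 * (m + (i + d)) + 1).doubleFactorial : ℝ) := by
      rw [show 2 * (m + (i + d + 1)) + 1 = 2 * (m + (i + d)) + 1 + 2 by omega,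
        Nat.doubleFactorial_add_two]
      push_cast; ring
    have e3 : ((m + 2 + i).factorial : ℝ) =
        ((m : ℝ) + i + 2) * (((m : ℝ) + i + 1) * ((m + i).factorial : ℝ)) := by
      rw [show m + 2 + i = (m + i) + 1 + 1 by omega, Nat.factorial_succ, Nat.factorial_succ]
      push_cast; ring
    have e4 : ((m + 2 + i + (i + d) + 1).factorial : ℝ) =
        ((m : ℝ) + 2 * i + d + 3) * (((m : ℝ) + 2 * i + d + 2) *
          ((m + i + (i + d) + 1).factorial : ℝ)) := by
      rw [show m + 2 + i + (i + d) + 1 = (m + i + (i + d) + 1) + 1 + 1 by omega,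
        Nat.factorial_succ, Nat.factorial_succ]
      push_cast; ring
    have e5 : ((m + (i + 1) + (i + d + 1) + 1).factorial : ℝ) =
        ((m : ℝ) + 2 * i + d + 3) * (((m : ℝ) + 2 * i + d + 2) *
          ((m + i + (i + d) + 1).factorial : ℝ)) := by
      rw [show m + (i + 1) + (i + d + 1) + 1 = (m + i + (i + d) + 1) + 1 + 1 by omega,
        Nat.factorial_succ, Nat.factorial_succ]
      push_cast; ring
    have e6 : ((m + (i + 1) + (i + d) + 1).factorial : ℝ) =
        ((m : ℝ) + 2 * i + d + 2) * ((m + i + (i + d) + 1).factorial : ℝ) := by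
      rw [show m + (i + 1) + (i + d) + 1 = (m + i + (i + d) + 1) + 1 by omega,
        Nat.factorial_succ]
      push_cast; ring
    have e7 : ((m + (i + 1)).factorial : ℝ) = ((m : ℝ) + i + 1) * ((m + i).factorial : ℝ) := by
      rw [show m + (i + 1) = (m + i) + 1 by omega, Nat.factorial_succ]
      push_cast; ring
    have e9 : (((i + 1).factorial : ℕ) : ℝ) = ((i : ℝ) + 1) * (i.factorial : ℝ) := by
      rw [Nat.factorial_succ]; push_cast; ring
    have n1 := fact_ne (m + i + (i + d) + 1)
    have n3 := fact_ne (m + i)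
    have n4 := fact_ne i
    have n5 := df_ne (2 * (m + (i + d)) + 1)
    have n6 : (2 : ℝ) ^ (i + d) ≠ 0 := by positivity
    have nb1 : ((m : ℝ) + 2 * i + d + 3) ≠ 0 := by positivity
    have nb2 : ((m : ℝ) + 2 * i + d + 2) ≠ 0 := by positivity
    have nb3 : ((i : ℝ) + 1) ≠ 0 := by positivity
    rcases d with _ | e
    · simp only [Nat.add_zero] at *
      rw [cc_eq_zero (show i < i + 1 by omega)]
      have r1 : cc (m + 2) i i =
          (((2 * (m + i) + 1).doubleFactorial : ℝ) * (((m + i).factorial : ℝ)) /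
            ((2 : ℝ) ^ i * ((m + i + i + 1).factorial : ℝ))) *
          ((2 * ((m : ℝ) + i) + 5) * ((2 * ((m : ℝ) + i) + 3) * (((m : ℝ) + i + 2) *
            (((m : ℝ) + i + 1)))) / (((m : ℝ) + 2 * i + 3) * ((m : ℝ) + 2 * i + 2))) := by
        rw [cc_eval (m + 2) i i 0 (by omega), e1, e3, e4]
        simp only [Nat.factorial_zero]
        push_cast
        field_simp
        ring
      have r2 : cc m (i + 1) (i + 1) =
          (((2 * (m + i) + 1).doubleFactorial : ℝ) * (((m + i).factorial : ℝ)) /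
            ((2 : ℝ) ^ i * ((m + i + i + 1).factorial : ℝ))) *
          ((2 * ((m : ℝ) + i) + 3) * ((m : ℝ) + i + 1) /
            (2 * (((m : ℝ) + 2 * i + 3) * ((m : ℝ) + 2 * i + 2)))) := by
        rw [cc_eval m (i + 1) (i + 1) 0 (by omega), e2, e5, e7, e9, pow_succ (2 : ℝ) i]
        simp only [Nat.factorial_zero]
        push_cast
        field_simp
        ring
      rw [r1, r2]
      push_cast
      field_simp
      ring
    · have e8 : (((e + 1).factorial : ℕ) : ℝ) = ((e : ℝ) + 1) * (e.factorial : ℝ) := by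
        rw [Nat.factorial_succ]; push_cast; ring
      have eQ : (((i + (e + 1) + 1).factorial : ℕ) : ℝ) =
          ((i : ℝ) + e + 2) * ((i + (e + 1)).factorial : ℝ) := by
        rw [Nat.factorial_succ]; push_cast; ring
      have n2 := fact_ne e
      have nQ := fact_ne (i + (e + 1))
      have nb4 : ((e : ℝ) + 1) ≠ 0 := by positivity
      set R : ℝ := ((2 * (m + (i + (e + 1))) + 1).doubleFactorial : ℝ) *
          ((i + (e + 1)).factorial : ℝ) * ((m + i).factorial : ℝ) /
          ((2 : ℝ) ^ (i + (e + 1)) * (i.factorial : ℝ) * (e.factorial : ℝ) *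
            ((m + i + (i + (e + 1)) + 1).factorial : ℝ)) with hR
      have r1 : cc (m + 2) (i + (e + 1)) i =
          R * ((-1 : ℝ) ^ (e + 1) *
            ((2 * ((m : ℝ) + i + e) + 7) * ((2 * ((m : ℝ) + i + e) + 5) *
              (((m : ℝ) + i + 2) * ((m : ℝ) + i + 1)))) /
            (((e : ℝ) + 1) * (((m : ℝ) + 2 * i + e + 4) * ((m : ℝ) + 2 * i + e + 3)))) := by
        rw [cc_eval (m + 2) (i + (e + 1)) i (e + 1) (by omega), e1, e3, e4, e8, hR]
        push_cast
        field_simp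
        ring
      have r2 : cc m (i + (e + 1) + 1) (i + 1) =
          R * ((-1 : ℝ) ^ (e + 1) *
            ((2 * ((m : ℝ) + i + e) + 5) * (((i : ℝ) + e + 2) * ((m : ℝ) + i + 1))) /
            (2 * (((i : ℝ) + 1) * (((e : ℝ) + 1) *
              (((m : ℝ) + 2 * i + e + 4) * ((m : ℝ) + 2 * i + e + 3)))))) := by
        rw [cc_eval m (i + (e + 1) + 1) (i + 1) (e + 1) (by omega), e2, e5, e7, e9, e8, eQ,
          pow_succ (2 : ℝ) (i + (e + 1)), hR]
        push_cast
        field_simp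
        ring
      have r3 : cc m (i + (e + 1)) (i + 1) =
          R * ((-1 : ℝ) ^ e * ((m : ℝ) + i + 1) /
            (((i : ℝ) + 1) * ((m : ℝ) + 2 * i + e + 3))) := by
        rw [cc_eval m (i + (e + 1)) (i + 1) e (by omega), e6, e7, e9, hR]
        push_cast
        field_simp
        ring
      rw [r1, r2, r3, pow_succ (-1 : ℝ) e]
      push_cast
      field_simp
      ring
  · rw [cc_eq_zero hiq, cc_eq_zero (show q + 1 < i + 1 by omega),
      cc_eq_zero (show q < i + 1 by omega)]
    simp

/-- final coefficient value. -/
lemma cc_final (m : ℕ) : cc m 0 0 = ((2 * m + 1).doubleFactorial : ℝ) / ((m : ℝ) + 1) := by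
  have b1 : ((m + 0 + 0 + 1).factorial : ℝ) = ((m : ℝ) + 1) * ((m + 0).factorial : ℝ) := by
    rw [show m + 0 + 0 + 1 = (m + 0) + 1 by omega, Nat.factorial_succ]; push_cast; ring
  rw [cc_eval m 0 0 0 (by omega), b1, show 2 * (m + 0) + 1 = 2 * m + 1 by omega]
  simp only [Nat.factorial_zero]
  have n3 := fact_ne (m + 0)
  have nb : ((m : ℝ) + 1) ≠ 0 := by positivity
  push_cast
  field_simp

/-- (P1) harmonic expansion of odd powers of `sinh`. -/
lemma P1 (q : ℕ) (r : ℝ) : Real.sinh r ^ (2 * q + 1) = S 0 q r := by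
  induction q with
  | zero =>
    simp only [S, Finset.sum_range_one, cc]
    norm_num [Nat.doubleFactorial]
  | succ q ih =>
    have hpow : Real.sinh r ^ (2 * (q + 1) + 1) =
        Real.sinh r ^ 2 * Real.sinh r ^ (2 * q + 1) := by
      rw [show 2 * (q + 1) + 1 = 2 + (2 * q + 1) by omega, pow_add]
    rw [hpow, ih]
    have step1 : Real.sinh r ^ 2 * S 0 q r =
        ((∑ i ∈ range (q + 1), cc 0 q i * Real.sinh ((3 + 2 * (i : ℝ)) * r)) -
          2 * (∑ i ∈ range (q + 1), cc 0 q i * Real.sinh ((1 + 2 * (i : ℝ)) * r)) +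
          (∑ i ∈ range (q + 1), cc 0 q i * Real.sinh ((-1 + 2 * (i : ℝ)) * r))) / 4 := by
      unfold S
      rw [Finset.mul_sum]
      have merge : (∑ i ∈ range (q + 1),
          (cc 0 q i * Real.sinh ((3 + 2 * (i : ℝ)) * r) -
            2 * (cc 0 q i * Real.sinh ((1 + 2 * (i : ℝ)) * r)) +
            cc 0 q i * Real.sinh ((-1 + 2 * (i : ℝ)) * r)) / 4) =
          ((∑ i ∈ range (q + 1), cc 0 q i * Real.sinh ((3 + 2 * (i : ℝ)) * r)) -
            2 * (∑ i ∈ range (q + 1), cc 0 q i * Real.sinh ((1 + 2 * (i : ℝ)) * r)) +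
            (∑ i ∈ range (q + 1), cc 0 q i * Real.sinh ((-1 + 2 * (i : ℝ)) * r))) / 4 := by
        rw [← Finset.sum_div, Finset.sum_add_distrib, Finset.sum_sub_distrib, ← Finset.mul_sum]
      rw [← merge]
      apply Finset.sum_congr rfl
      intro i _
      rw [show (((0 : ℕ) : ℝ) + 1 + 2 * (i : ℝ)) = 1 + 2 * (i : ℝ) by push_cast; ring]
      have h := sinh_sq_mul (1 + 2 * (i : ℝ)) r
      rw [show ((1 + 2 * (i : ℝ)) + 2) = 3 + 2 * (i : ℝ) by ring,
        show ((1 + 2 * (i : ℝ)) - 2) = -1 + 2 * (i : ℝ) by ring] at h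
      linear_combination (cc 0 q i) * h
    have hDm : (∑ i ∈ range (q + 1), cc 0 q i * Real.sinh ((-1 + 2 * (i : ℝ)) * r)) =
        (∑ i ∈ range (q + 1), cc 0 q (i + 1) * Real.sinh ((1 + 2 * (i : ℝ)) * r)) -
          cc 0 q 0 * Real.sinh r := by
      conv_lhs => rw [Finset.sum_range_succ']
      rw [show ((-1) + 2 * (((0 : ℕ)) : ℝ)) = -1 by push_cast; ring, neg_one_mul,
        Real.sinh_neg]
      have inner : (∑ i ∈ range q, cc 0 q (i + 1) *
          Real.sinh ((-1 + 2 * (((i + 1 : ℕ)) : ℝ)) * r)) =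
          ∑ i ∈ range (q + 1), cc 0 q (i + 1) * Real.sinh ((1 + 2 * (i : ℝ)) * r) := by
        rw [Finset.sum_congr rfl (fun i (_ : i ∈ range q) => by
          rw [show ((-1) + 2 * (((i + 1 : ℕ)) : ℝ)) = 1 + 2 * (i : ℝ) by push_cast; ring])]
        exact pad_sum (fun i => cc 0 q (i + 1)) (fun i => Real.sinh ((1 + 2 * (i : ℝ)) * r))
          (by omega) (fun i hi => cc_eq_zero (by omega))
      rw [inner]
      ring
    have hM : (∑ i ∈ range (q + 1), cc 0 q i * Real.sinh ((1 + 2 * (i : ℝ)) * r)) =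
        cc 0 q 0 * Real.sinh r +
          ∑ i ∈ range (q + 1), cc 0 q (i + 1) * Real.sinh ((3 + 2 * (i : ℝ)) * r) := by
      conv_lhs => rw [Finset.sum_range_succ']
      rw [show ((1 : ℝ) + 2 * (((0 : ℕ)) : ℝ)) = 1 by push_cast; ring, one_mul]
      have inner : (∑ i ∈ range q, cc 0 q (i + 1) *
          Real.sinh ((1 + 2 * (((i + 1 : ℕ)) : ℝ)) * r)) =
          ∑ i ∈ range (q + 1), cc 0 q (i + 1) * Real.sinh ((3 + 2 * (i : ℝ)) * r) := by
        rw [Finset.sum_congr rfl (fun i (_ : i ∈ range q) => by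
          rw [show ((1 : ℝ) + 2 * (((i + 1 : ℕ)) : ℝ)) = 3 + 2 * (i : ℝ) by push_cast; ring])]
        exact pad_sum (fun i => cc 0 q (i + 1)) (fun i => Real.sinh ((3 + 2 * (i : ℝ)) * r))
          (by omega) (fun i hi => cc_eq_zero (by omega))
      rw [inner]
      ring
    have hD2 : (∑ i ∈ range (q + 1), cc 0 q (i + 1) * Real.sinh ((1 + 2 * (i : ℝ)) * r)) =
        cc 0 q 1 * Real.sinh r +
          ∑ i ∈ range (q + 1), cc 0 q (i + 2) * Real.sinh ((3 + 2 * (i : ℝ)) * r) := by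
      conv_lhs => rw [Finset.sum_range_succ']
      rw [show ((1 : ℝ) + 2 * (((0 : ℕ)) : ℝ)) = 1 by push_cast; ring, one_mul]
      have inner : (∑ i ∈ range q, cc 0 q (i + 1 + 1) *
          Real.sinh ((1 + 2 * (((i + 1 : ℕ)) : ℝ)) * r)) =
          ∑ i ∈ range (q + 1), cc 0 q (i + 2) * Real.sinh ((3 + 2 * (i : ℝ)) * r) := by
        rw [Finset.sum_congr rfl (fun i (_ : i ∈ range q) => by
          rw [show ((1 : ℝ) + 2 * (((i + 1 : ℕ)) : ℝ)) = 3 + 2 * (i : ℝ) by push_cast; ring,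
            show i + 1 + 1 = i + 2 from rfl])]
        exact pad_sum (fun i => cc 0 q (i + 2)) (fun i => Real.sinh ((3 + 2 * (i : ℝ)) * r))
          (by omega) (fun i hi => cc_eq_zero (by omega))
      rw [inner, show (0 : ℕ) + 1 = 1 from rfl]
      ring
    have hT : S 0 (q + 1) r = cc 0 (q + 1) 0 * Real.sinh r +
        ∑ j ∈ range (q + 1), cc 0 (q + 1) (j + 1) * Real.sinh ((3 + 2 * (j : ℝ)) * r) := by
      unfold S
      conv_lhs => rw [Finset.sum_range_succ']
      rw [show (((0 : ℕ) : ℝ) + 1 + 2 * (((0 : ℕ)) : ℝ)) = 1 by push_cast; ring, one_mul]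
      have inner : (∑ j ∈ range (q + 1), cc 0 (q + 1) (j + 1) *
          Real.sinh ((((0 : ℕ) : ℝ) + 1 + 2 * (((j + 1 : ℕ)) : ℝ)) * r)) =
          ∑ j ∈ range (q + 1), cc 0 (q + 1) (j + 1) * Real.sinh ((3 + 2 * (j : ℝ)) * r) := by
        apply Finset.sum_congr rfl
        intro j _
        rw [show (((0 : ℕ) : ℝ) + 1 + 2 * (((j + 1 : ℕ)) : ℝ)) = 3 + 2 * (j : ℝ) by
          push_cast; ring]
      rw [inner]
      ring
    have hT1 : ((∑ i ∈ range (q + 1), cc 0 q i * Real.sinh ((3 + 2 * (i : ℝ)) * r)) -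
          2 * (∑ i ∈ range (q + 1), cc 0 q (i + 1) * Real.sinh ((3 + 2 * (i : ℝ)) * r)) +
          (∑ i ∈ range (q + 1), cc 0 q (i + 2) * Real.sinh ((3 + 2 * (i : ℝ)) * r))) / 4 =
        ∑ j ∈ range (q + 1), cc 0 (q + 1) (j + 1) * Real.sinh ((3 + 2 * (j : ℝ)) * r) := by
      have merge2 : (∑ j ∈ range (q + 1),
          (cc 0 q j * Real.sinh ((3 + 2 * (j : ℝ)) * r) -
            2 * (cc 0 q (j + 1) * Real.sinh ((3 + 2 * (j : ℝ)) * r)) +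
            cc 0 q (j + 2) * Real.sinh ((3 + 2 * (j : ℝ)) * r)) / 4) =
          ((∑ i ∈ range (q + 1), cc 0 q i * Real.sinh ((3 + 2 * (i : ℝ)) * r)) -
            2 * (∑ i ∈ range (q + 1), cc 0 q (i + 1) * Real.sinh ((3 + 2 * (i : ℝ)) * r)) +
            (∑ i ∈ range (q + 1), cc 0 q (i + 2) * Real.sinh ((3 + 2 * (i : ℝ)) * r))) / 4 := by
        rw [← Finset.sum_div, Finset.sum_add_distrib, Finset.sum_sub_distrib, ← Finset.mul_sum]
      rw [← merge2]
      apply Finset.sum_congr rfl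
      intro j _
      have hc := C3b q j
      linear_combination (-(Real.sinh ((3 + 2 * (j : ℝ)) * r)) / 4) * hc
    rw [step1, hDm, hD2, hM, hT, ← hT1]
    linear_combination (-(Real.sinh r) / 4) * C3a q

/-- (P2) harmonic expansion of `sinh^{2q+1} cosh`. -/
lemma P2 (q : ℕ) (r : ℝ) :
    Real.sinh r ^ (2 * q + 1) * Real.cosh r = S 1 q r / (2 * q + 3) := by
  rw [eq_div_iff (by positivity : (2 * (q : ℝ) + 3) ≠ 0), P1 q r]
  have main : (∑ i ∈ range (q + 1), (2 * (q : ℝ) + 3) / 2 * (cc 0 q i + cc 0 q (i + 1)) *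
      Real.sinh ((2 + 2 * (i : ℝ)) * r)) = S 1 q r := by
    unfold S
    apply Finset.sum_congr rfl
    intro i _
    have hc := C2 q i
    rw [show (((1 : ℕ) : ℝ) + 1 + 2 * (i : ℝ)) = 2 + 2 * (i : ℝ) by push_cast; ring]
    push_cast at hc
    linear_combination (-(Real.sinh ((2 + 2 * (i : ℝ)) * r)) / 2) * hc
  rw [← main]
  unfold S
  rw [Finset.sum_mul, Finset.sum_mul]
  have expand : (∑ i ∈ range (q + 1),
        cc 0 q i * Real.sinh ((((0 : ℕ) : ℝ) + 1 + 2 * (i : ℝ)) * r) * Real.cosh r *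
          (2 * (q : ℝ) + 3)) =
      (∑ i ∈ range (q + 1), (2 * (q : ℝ) + 3) / 2 * cc 0 q i *
        Real.sinh ((2 + 2 * (i : ℝ)) * r)) +
      (∑ i ∈ range (q + 1), (2 * (q : ℝ) + 3) / 2 * cc 0 q i *
        Real.sinh ((2 * (i : ℝ)) * r)) := by
    rw [← Finset.sum_add_distrib]
    apply Finset.sum_congr rfl
    intro i _
    have h := cosh_mul_sinh (((0 : ℕ) : ℝ) + 1 + 2 * (i : ℝ)) r
    rw [show (((0 : ℕ) : ℝ) + 1 + 2 * (i : ℝ) + 1) = 2 + 2 * (i : ℝ) by push_cast; ring,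
      show (((0 : ℕ) : ℝ) + 1 + 2 * (i : ℝ) - 1) = 2 * (i : ℝ) by push_cast; ring] at h
    linear_combination (cc 0 q i * (2 * (q : ℝ) + 3)) * h
  rw [expand]
  have hshift : (∑ i ∈ range (q + 1), (2 * (q : ℝ) + 3) / 2 * cc 0 q i *
      Real.sinh ((2 * (i : ℝ)) * r)) = ∑ i ∈ range (q + 1),
        ((2 * (q : ℝ) + 3) / 2 * cc 0 q (i + 1)) * Real.sinh ((2 + 2 * (i : ℝ)) * r) := by
    rw [Finset.sum_range_succ']
    have f0 : (2 * (q : ℝ) + 3) / 2 * cc 0 q 0 * Real.sinh ((2 * (((0 : ℕ) : ℝ))) * r) = 0 := by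
      simp
    rw [f0, add_zero]
    have congr1 : (∑ i ∈ range q, (2 * (q : ℝ) + 3) / 2 * cc 0 q (i + 1) *
        Real.sinh ((2 * (((i + 1 : ℕ) : ℝ))) * r)) = ∑ i ∈ range q,
          ((2 * (q : ℝ) + 3) / 2 * cc 0 q (i + 1)) * Real.sinh ((2 + 2 * (i : ℝ)) * r) := by
      apply Finset.sum_congr rfl
      intro i _
      rw [show (2 * (((i + 1 : ℕ) : ℝ))) = 2 + 2 * (i : ℝ) by push_cast; ring]
    rw [congr1]
    exact pad_sum (fun i => (2 * (q : ℝ) + 3) / 2 * cc 0 q (i + 1))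
      (fun i => Real.sinh ((2 + 2 * (i : ℝ)) * r)) (by omega)
      (fun i hi => by
        show (2 * (q : ℝ) + 3) / 2 * cc 0 q (i + 1) = 0
        rw [cc_eq_zero (by omega), mul_zero])
  rw [hshift, ← Finset.sum_add_distrib]
  apply Finset.sum_congr rfl
  intro i _
  ring

/-- (P3) the key algebraic recursion for `S`. -/
lemma P3 (m q : ℕ) (r : ℝ) :
    S (m + 2) q r =
      (2 * (m + q) + 5) *
        ((2 * (m + q) + 4) * S m (q + 1) r + (2 * (m + q) + 3) * S m q r) := by
  have hpad : S m q r =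
      ∑ i ∈ range (q + 2), cc m q i * Real.sinh (((m : ℝ) + 1 + 2 * i) * r) := by
    unfold S
    exact pad_sum (fun i => cc m q i) (fun i => Real.sinh (((m : ℝ) + 1 + 2 * i) * r))
      (by omega) (fun i hi => cc_eq_zero (by omega))
  have main : (∑ i ∈ range (q + 2), (2 * ((m : ℝ) + q) + 5) *
        ((2 * ((m : ℝ) + q) + 4) * cc m (q + 1) i + (2 * ((m : ℝ) + q) + 3) * cc m q i) *
          Real.sinh (((m : ℝ) + 1 + 2 * (i : ℝ)) * r)) = S (m + 2) q r := by
    rw [Finset.sum_range_succ']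
    have h0 : (2 * ((m : ℝ) + q) + 5) *
        ((2 * ((m : ℝ) + q) + 4) * cc m (q + 1) 0 + (2 * ((m : ℝ) + q) + 3) * cc m q 0) *
          Real.sinh (((m : ℝ) + 1 + 2 * ((0 : ℕ) : ℝ)) * r) = 0 := by
      have hc := C0 m q
      push_cast at hc ⊢
      linear_combination (2 * ((m : ℝ) + q) + 5) *
        Real.sinh (((m : ℝ) + 1 + 2 * (0 : ℝ)) * r) * hc
    rw [h0, add_zero]
    unfold S
    apply Finset.sum_congr rfl
    intro i _
    rw [C1 m q i, show (((m + 2 : ℕ) : ℝ) + 1 + 2 * (i : ℝ)) =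
      ((m : ℝ) + 1 + 2 * (((i + 1 : ℕ) : ℝ))) by push_cast; ring]
  rw [← main, hpad]
  unfold S
  rw [show q + 1 + 1 = q + 2 from rfl, Finset.mul_sum, Finset.mul_sum,
    ← Finset.sum_add_distrib, Finset.mul_sum]
  apply Finset.sum_congr rfl
  intro i _
  push_cast
  ring

/-- congruence for `Lop` on the set `x ≠ 0`. -/
lemma Lop_congr {f g : ℝ → ℝ} (h : ∀ x, x ≠ 0 → f x = g x) :
    ∀ x, x ≠ (0 : ℝ) → Lop f x = Lop g x := by
  intro x hx
  have hmem : {y : ℝ | y ≠ 0} ∈ nhds x := isOpen_ne.mem_nhds hx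
  have hev : f =ᶠ[nhds x] g := Filter.eventuallyEq_of_mem hmem fun y hy => h y hy
  unfold Lop
  rw [hev.deriv_eq]

lemma Lop_iter_congr (n : ℕ) {f g : ℝ → ℝ} (h : ∀ x, x ≠ 0 → f x = g x) :
    ∀ x, x ≠ (0 : ℝ) → Lop^[n] f x = Lop^[n] g x := by
  induction n generalizing f g with
  | zero => simpa using h
  | succ n ih =>
    intro x hx
    rw [Function.iterate_succ_apply, Function.iterate_succ_apply]
    exact ih (Lop_congr h) x hx

lemma Lop_const_mul (a : ℝ) (f : ℝ → ℝ) :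
    Lop (fun y => a * f y) = fun y => a * Lop f y := by
  funext y
  unfold Lop
  rw [deriv_const_mul_field]
  ring

lemma Lop_iter_const_mul (n : ℕ) (a : ℝ) (f : ℝ → ℝ) :
    Lop^[n] (fun y => a * f y) = fun y => a * Lop^[n] f y := by
  induction n generalizing f with
  | zero => rfl
  | succ n ih =>
    rw [Function.iterate_succ_apply, Lop_const_mul, ih, Function.iterate_succ_apply]

lemma Lop_iter_add (n : ℕ) :
    ∀ f g : ℝ → ℝ,
      (∀ i ≤ n, ∀ x, x ≠ (0 : ℝ) → DifferentiableAt ℝ (Lop^[i] f) x) →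
      (∀ i ≤ n, ∀ x, x ≠ (0 : ℝ) → DifferentiableAt ℝ (Lop^[i] g) x) →
      ∀ x, x ≠ (0 : ℝ) →
        Lop^[n] (fun y => f y + g y) x = Lop^[n] f x + Lop^[n] g x := by
  induction n with
  | zero => intro f g _ _ x _; rfl
  | succ n ih =>
    intro f g hf hg x hx
    rw [Function.iterate_succ_apply, Function.iterate_succ_apply,
      Function.iterate_succ_apply]
    have h1 : ∀ y, y ≠ (0 : ℝ) →
        Lop (fun y => f y + g y) y = Lop f y + Lop g y := by
      intro y hy
      have Hf : DifferentiableAt ℝ f y := hf 0 (Nat.zero_le _) y hy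
      have Hg : DifferentiableAt ℝ g y := hg 0 (Nat.zero_le _) y hy
      unfold Lop
      rw [deriv_fun_add Hf Hg, add_div]
    rw [Lop_iter_congr n h1 x hx]
    exact ih (Lop f) (Lop g)
      (fun i hi y hy => by
        have := hf (i + 1) (by omega) y hy
        rwa [Function.iterate_succ_apply] at this)
      (fun i hi y hy => by
        have := hg (i + 1) (by omega) y hy
        rwa [Function.iterate_succ_apply] at this)
      x hx

lemma S_differentiable (m q : ℕ) : Differentiable ℝ (S m q) := by
  unfold S
  apply Differentiable.fun_sum
  intro i _
  apply Differentiable.const_mul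
  exact Real.differentiable_sinh.comp (differentiable_id.const_mul _)

/-- `Lop` applied to an odd power of `sinh` (exponent at least 3). -/
lemma Lop_pow (n : ℕ) {x : ℝ} (hx : x ≠ 0) :
    Lop (fun y => Real.sinh y ^ (2 * n + 3)) x =
      (2 * n + 3) * (Real.sinh x ^ (2 * n + 1) * Real.cosh x) := by
  have hd : HasDerivAt (fun y => Real.sinh y ^ (2 * n + 3))
      ((2 * n + 3 : ℕ) * Real.sinh x ^ (2 * n + 2) * Real.cosh x) x := by
    simpa using (Real.hasDerivAt_sinh x).fun_pow (2 * n + 3)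
  unfold Lop
  rw [hd.deriv]
  have hs : Real.sinh x ≠ 0 := Real.sinh_ne_zero.mpr hx
  field_simp
  push_cast
  ring

/-- `Lop` applied to `sinh^{2n+3} cosh`. -/
lemma Lop_pow_cosh (n : ℕ) {x : ℝ} (hx : x ≠ 0) :
    Lop (fun y => Real.sinh y ^ (2 * n + 3) * Real.cosh y) x =
      (2 * n + 4) * Real.sinh x ^ (2 * (n + 1) + 1) +
        (2 * n + 3) * Real.sinh x ^ (2 * n + 1) := by
  have hd : HasDerivAt (fun y => Real.sinh y ^ (2 * n + 3) * Real.cosh y)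
      (((2 * n + 3 : ℕ) * Real.sinh x ^ (2 * n + 2) * Real.cosh x) * Real.cosh x +
        Real.sinh x ^ (2 * n + 3) * Real.sinh x) x := by
    exact ((Real.hasDerivAt_sinh x).pow (2 * n + 3) |>.congr_deriv (by norm_num)).mul
      (Real.hasDerivAt_cosh x)
  have hs : Real.sinh x ≠ 0 := Real.sinh_ne_zero.mpr hx
  have hc : Real.cosh x ^ 2 = Real.sinh x ^ 2 + 1 := Real.cosh_sq x
  unfold Lop
  rw [hd.deriv, div_eq_iff hs]
  push_cast
  linear_combination ((2 * (n : ℝ) + 3) * Real.sinh x ^ (2 * n + 2)) * hc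

/-- The master induction. -/
theorem master : ∀ m : ℕ,
    (∀ q : ℕ, ∀ x : ℝ, x ≠ 0 →
      Lop^[m] (fun y => Real.sinh y ^ (2 * (m + q) + 1)) x = S m q x) ∧
    (∀ q : ℕ, ∀ x : ℝ, x ≠ 0 →
      Lop^[m] (fun y => Real.sinh y ^ (2 * (m + q) + 1) * Real.cosh y) x =
        S (m + 1) q x / (2 * (m + q) + 3)) := by
  intro m
  induction m using Nat.strong_induction_on with
  | _ m IH =>
    match m with
    | 0 =>
      constructor
      · intro q x hx
        simp only [Function.iterate_zero, id_eq]
        rw [show 2 * (0 + q) + 1 = 2 * q + 1 by omega]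
        exact P1 q x
      · intro q x hx
        simp only [Function.iterate_zero, id_eq]
        rw [show 2 * (0 + q) + 1 = 2 * q + 1 by omega,
          show (2 * (((0 : ℕ) : ℝ) + (q : ℝ)) + 3) = 2 * (q : ℝ) + 3 by push_cast; ring]
        exact P2 q x
    | (m + 1) =>
      have IHm := IH m (by omega)
      constructor
      · intro q x hx
        rw [Function.iterate_succ_apply]
        have h1 : ∀ y, y ≠ (0 : ℝ) →
            Lop (fun y => Real.sinh y ^ (2 * (m + 1 + q) + 1)) y =
            (fun y => (2 * ((m + q : ℕ) : ℝ) + 3) *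
              (Real.sinh y ^ (2 * (m + q) + 1) * Real.cosh y)) y := by
          intro y hy
          rw [show 2 * (m + 1 + q) + 1 = 2 * (m + q) + 3 by omega]
          exact Lop_pow (m + q) hy
        rw [Lop_iter_congr m h1 x hx,
          Lop_iter_const_mul m (2 * ((m + q : ℕ) : ℝ) + 3)
            (fun y => Real.sinh y ^ (2 * (m + q) + 1) * Real.cosh y)]
        show (2 * ((m + q : ℕ) : ℝ) + 3) *
            Lop^[m] (fun y => Real.sinh y ^ (2 * (m + q) + 1) * Real.cosh y) x =
          S (m + 1) q x
        rw [IHm.2 q x hx, show (2 * ((m + q : ℕ) : ℝ) + 3) = 2 * ((m : ℝ) + q) + 3 by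
          push_cast; ring]
        rw [mul_div_cancel₀ _ (by positivity : (2 * ((m : ℝ) + q) + 3) ≠ 0)]
      · intro q x hx
        rw [Function.iterate_succ_apply]
        have h1 : ∀ y, y ≠ (0 : ℝ) →
            Lop (fun y => Real.sinh y ^ (2 * (m + 1 + q) + 1) * Real.cosh y) y =
            (fun y => (2 * ((m + q : ℕ) : ℝ) + 4) * Real.sinh y ^ (2 * (m + q + 1) + 1) +
              (2 * ((m + q : ℕ) : ℝ) + 3) * Real.sinh y ^ (2 * (m + q) + 1)) y := by
          intro y hy
          rw [show 2 * (m + 1 + q) + 1 = 2 * (m + q) + 3 by omega]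
          exact Lop_pow_cosh (m + q) hy
        rw [Lop_iter_congr m h1 x hx]
        have hdiffF : ∀ i, i ≤ m → ∀ y, y ≠ (0 : ℝ) → DifferentiableAt ℝ
            (Lop^[i] (fun y => Real.sinh y ^ (2 * (m + q + 1) + 1))) y := by
          intro i hi y hy
          have hA := (IH i (by omega)).1 (m + q + 1 - i)
          rw [show 2 * (i + (m + q + 1 - i)) + 1 = 2 * (m + q + 1) + 1 by omega] at hA
          have hev : Lop^[i] (fun y => Real.sinh y ^ (2 * (m + q + 1) + 1)) =ᶠ[nhds y]
              S i (m + q + 1 - i) := by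
            have hmem : {z : ℝ | z ≠ 0} ∈ nhds y := isOpen_ne.mem_nhds hy
            exact Filter.eventuallyEq_of_mem hmem fun z hz => hA z hz
          exact hev.differentiableAt_iff.mpr (S_differentiable _ _ y)
        have hdiffG : ∀ i, i ≤ m → ∀ y, y ≠ (0 : ℝ) → DifferentiableAt ℝ
            (Lop^[i] (fun y => Real.sinh y ^ (2 * (m + q) + 1))) y := by
          intro i hi y hy
          have hA := (IH i (by omega)).1 (m + q - i)
          rw [show 2 * (i + (m + q - i)) + 1 = 2 * (m + q) + 1 by omega] at hA
          have hev : Lop^[i] (fun y => Real.sinh y ^ (2 * (m + q) + 1)) =ᶠ[nhds y]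
              S i (m + q - i) := by
            have hmem : {z : ℝ | z ≠ 0} ∈ nhds y := isOpen_ne.mem_nhds hy
            exact Filter.eventuallyEq_of_mem hmem fun z hz => hA z hz
          exact hev.differentiableAt_iff.mpr (S_differentiable _ _ y)
        have key := Lop_iter_add m
          (fun y => (2 * ((m + q : ℕ) : ℝ) + 4) * Real.sinh y ^ (2 * (m + q + 1) + 1))
          (fun y => (2 * ((m + q : ℕ) : ℝ) + 3) * Real.sinh y ^ (2 * (m + q) + 1))
          (fun i hi y hy => by
            rw [Lop_iter_const_mul i (2 * ((m + q : ℕ) : ℝ) + 4)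
              (fun y => Real.sinh y ^ (2 * (m + q + 1) + 1))]
            exact (hdiffF i hi y hy).const_mul _)
          (fun i hi y hy => by
            rw [Lop_iter_const_mul i (2 * ((m + q : ℕ) : ℝ) + 3)
              (fun y => Real.sinh y ^ (2 * (m + q) + 1))]
            exact (hdiffG i hi y hy).const_mul _)
          x hx
        rw [key,
          Lop_iter_const_mul m (2 * ((m + q : ℕ) : ℝ) + 4)
            (fun y => Real.sinh y ^ (2 * (m + q + 1) + 1)),
          Lop_iter_const_mul m (2 * ((m + q : ℕ) : ℝ) + 3)
            (fun y => Real.sinh y ^ (2 * (m + q) + 1))]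
        show (2 * ((m + q : ℕ) : ℝ) + 4) *
            Lop^[m] (fun y => Real.sinh y ^ (2 * (m + q + 1) + 1)) x +
          (2 * ((m + q : ℕ) : ℝ) + 3) *
            Lop^[m] (fun y => Real.sinh y ^ (2 * (m + q) + 1)) x =
          S (m + 1 + 1) q x / (2 * (((m + 1 : ℕ) : ℝ) + (q : ℝ)) + 3)
        rw [show 2 * (m + q + 1) + 1 = 2 * (m + (q + 1)) + 1 by omega,
          IHm.1 (q + 1) x hx, IHm.1 q x hx,
          show m + 1 + 1 = m + 2 from rfl]
        have hp := P3 m q x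
        rw [eq_div_iff (by positivity : (2 * (((m + 1 : ℕ) : ℝ) + (q : ℝ)) + 3) ≠ 0)]
        push_cast at hp ⊢
        linear_combination -hp

/-- For k ≥ 1 and every real r, the (2k-1)-fold application of
L f r = f'(r)/sinh r to sinh^{4k-1} r equals ((4k-1)!!/(2k)) sinh(2k r). -/
theorem stmt_3 (k : ℕ) (hk : 1 ≤ k) (r : ℝ) :
    (fun f : ℝ → ℝ => fun x => deriv f x / Real.sinh x)^[2 * k - 1]
        (fun x => Real.sinh x ^ (4 * k - 1)) r =
      ((4 * k - 1).doubleFactorial : ℝ) / (2 * k) *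
        Real.sinh (2 * k * r) := by
  show Lop^[2 * k - 1] (fun x => Real.sinh x ^ (4 * k - 1)) r = _
  rcases eq_or_ne r 0 with rfl | hr
  · obtain ⟨j, hj⟩ : ∃ j, 2 * k - 1 = j + 1 := ⟨2 * k - 2, by omega⟩
    rw [hj, Function.iterate_succ_apply']
    simp [Lop]
  · have hA := (master (2 * k - 1)).1 0 r hr
    rw [show 2 * (2 * k - 1 + 0) + 1 = 4 * k - 1 by omega] at hA
    rw [hA]
    unfold S
    rw [Finset.sum_range_one, cc_final,
      show 2 * (2 * k - 1) + 1 = 4 * k - 1 by omega,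
      show ((2 * k - 1 : ℕ) : ℝ) = 2 * (k : ℝ) - 1 by
        push_cast [Nat.cast_sub (show 1 ≤ 2 * k by omega)]; ring,
      show (2 * (k : ℝ) - 1 + 1) = 2 * (k : ℝ) by ring,
      show (2 * (k : ℝ) + 2 * ((0 : ℕ) : ℝ)) = 2 * (k : ℝ) by push_cast; ring]

end StmtThree
end
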